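/- arXiv:1310.3164 — 9 statements merged into one kernel-verified Lean document; each statement's English description precedes it below -/
import Mathlib

section
/- For every rook placement D ⊆ Φ⁺, the B-orbit of f_D is the union of the U-orbits of the forms f_{D,ξ}: Ω_D = ⋃_{ξ : D → ℂ∖{0}} Θ_{D,ξ}. -/
/-- The set of positive roots of `A_{n-1}`, encoded as pairs `(i,j)` with `1 ≤ j < i ≤ n`. -/
def PhiPos (n : ℕ) : Finset (ℕ × ℕ) :=
  (Finset.Icc 1 n ×ˢ Finset.Icc 1 n).filter (fun p => p.2 < p.1)

/-- `D` is a rook placement: a subset of `Φ⁺` whose distinct elements never share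
a row or a column. -/
def IsRP (n : ℕ) (D : Finset (ℕ × ℕ)) : Prop :=
  D ⊆ PhiPos n ∧ ∀ p ∈ D, ∀ q ∈ D, p ≠ q → p.1 ≠ q.1 ∧ p.2 ≠ q.2
/-- Strictly lower-triangular part of a matrix. -/
def lowPart {n : ℕ} (X : Matrix (Fin n) (Fin n) ℂ) : Matrix (Fin n) (Fin n) ℂ :=
  Matrix.of fun i j => if (j : ℕ) < (i : ℕ) then X i j else 0

/-- Upper-triangular matrix (an element of `B` must moreover be invertible). -/
def IsUpperTri {n : ℕ} (b : Matrix (Fin n) (Fin n) ℂ) : Prop :=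
  ∀ i j : Fin n, (j : ℕ) < (i : ℕ) → b i j = 0

/-- Upper unitriangular matrix, i.e. an element of `U`. -/
def IsUnitri {n : ℕ} (u : Matrix (Fin n) (Fin n) ℂ) : Prop :=
  IsUpperTri u ∧ ∀ i, u i i = 1

/-- The matrix `f_D` of a rook placement: entry `1` at the (1-based) positions in `D`. -/
def fD (n : ℕ) (D : Finset (ℕ × ℕ)) : Matrix (Fin n) (Fin n) ℂ :=
  Matrix.of fun i j => if ((i : ℕ) + 1, (j : ℕ) + 1) ∈ D then 1 else 0

/-- The matrix `f_{D,ξ}`: entry `ξ(i,j)` at the (1-based) positions `(i,j) ∈ D`. -/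
def fDxi (n : ℕ) (D : Finset (ℕ × ℕ)) (ξ : ℕ × ℕ → ℂ) : Matrix (Fin n) (Fin n) ℂ :=
  Matrix.of fun i j =>
    if ((i : ℕ) + 1, (j : ℕ) + 1) ∈ D then ξ ((i : ℕ) + 1, (j : ℕ) + 1) else 0

/-- The coadjoint action `b.λ = (b λ b⁻¹)_low`. -/
noncomputable def coact {n : ℕ} (b l : Matrix (Fin n) (Fin n) ℂ) :
    Matrix (Fin n) (Fin n) ℂ := lowPart (b * l * b⁻¹)

/-- The `B`-orbit `Ω_D = B.f_D`. -/
noncomputable def Omega (n : ℕ) (D : Finset (ℕ × ℕ)) : Set (Matrix (Fin n) (Fin n) ℂ) :=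
  {l | ∃ b, IsUnit b ∧ IsUpperTri b ∧ l = coact b (fD n D)}

/-- The `U`-orbit `Θ_{D,ξ} = U.f_{D,ξ}`. -/
noncomputable def Theta (n : ℕ) (D : Finset (ℕ × ℕ)) (ξ : ℕ × ℕ → ℂ) :
    Set (Matrix (Fin n) (Fin n) ℂ) :=
  {l | ∃ u, IsUnitri u ∧ l = coact u (fDxi n D ξ)}

/-
Every `b ∈ B` factors as `b = u t` with `u ∈ U` and `t` diagonal, and conjugating `f_D` by
`t = diag(t₁, …, tₙ)` rescales its entry at `(i,j)` to `tᵢ / tⱼ`; hence `b.f_D = u.f_{D,ξ}` with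
`ξ(i,j) = tᵢ / tⱼ`. Conversely every nonvanishing `ξ` on a rook placement is of this form: each row
`i` of `D` holds at most one entry `(i,j)`, and `j < i`, so `tᵢ = ξ(i,j) tⱼ` defines `t`
by recursion on `i`.
-/

open Matrix

section Triangular

variable {n : ℕ}

lemma IsUpperTri.isUpperTriangular {b : Matrix (Fin n) (Fin n) ℂ} (hb : IsUpperTri b) :
    b.IsUpperTriangular :=
  fun i j hji => hb i j hji

lemma IsUpperTri.diag_ne_zero {b : Matrix (Fin n) (Fin n) ℂ} (hb : IsUpperTri b)
    (hu : IsUnit b) (k : Fin n) : b k k ≠ 0 := by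
  have hdet : b.det ≠ 0 := ((isUnit_iff_isUnit_det b).mp hu).ne_zero
  rw [det_of_isUpperTriangular hb.isUpperTriangular] at hdet
  exact fun h => hdet (Finset.prod_eq_zero (Finset.mem_univ k) h)

lemma IsUpperTri.mul_diagonal {b : Matrix (Fin n) (Fin n) ℂ} (hb : IsUpperTri b)
    (d : Fin n → ℂ) : IsUpperTri (b * diagonal d) := by
  intro i j hij
  rw [Matrix.mul_diagonal, hb i j hij, zero_mul]

lemma IsUnitri.isUnit {u : Matrix (Fin n) (Fin n) ℂ} (hu : IsUnitri u) : IsUnit u := by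
  rw [isUnit_iff_isUnit_det, det_of_isUpperTriangular hu.1.isUpperTriangular]
  simp [hu.2]

lemma IsUpperTri.exists_isUnitri_mul_diagonal {b : Matrix (Fin n) (Fin n) ℂ} (hb : IsUpperTri b)
    (hu : IsUnit b) : ∃ u, IsUnitri u ∧ b = u * diagonal (fun k => b k k) := by
  refine ⟨b * diagonal (fun k => (b k k)⁻¹), ⟨hb.mul_diagonal _, fun i => ?_⟩, ?_⟩
  · rw [Matrix.mul_diagonal]
    exact mul_inv_cancel₀ (hb.diag_ne_zero hu i)
  · rw [Matrix.mul_assoc, diagonal_mul_diagonal]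
    conv_lhs => rw [← Matrix.mul_one b, ← diagonal_one]
    congr 2
    funext k
    exact (inv_mul_cancel₀ (hb.diag_ne_zero hu k)).symm

end Triangular

lemma inv_diagonal_of_ne_zero {n : ℕ} {d : Fin n → ℂ} (hd : ∀ k, d k ≠ 0) :
    (diagonal d)⁻¹ = diagonal (fun k => (d k)⁻¹) := by
  apply inv_eq_right_inv
  rw [diagonal_mul_diagonal, ← diagonal_one]
  exact congrArg diagonal (funext fun k => mul_inv_cancel₀ (hd k))

lemma coact_mul_diagonal {n : ℕ} (u X : Matrix (Fin n) (Fin n) ℂ) {d : Fin n → ℂ}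
    (hd : ∀ k, d k ≠ 0) :
    coact (u * diagonal d) X
      = coact u (diagonal d * X * diagonal (fun k => (d k)⁻¹)) := by
  unfold coact
  rw [Matrix.mul_inv_rev, inv_diagonal_of_ne_zero hd]
  simp only [Matrix.mul_assoc]

lemma diagonal_mul_fD_mul_diagonal_inv (n : ℕ) (D : Finset (ℕ × ℕ)) (t : ℕ → ℂ) :
    diagonal (fun k : Fin n => t ((k : ℕ) + 1)) * fD n D
        * diagonal (fun k : Fin n => (t ((k : ℕ) + 1))⁻¹)
      = fDxi n D (fun p => t p.1 / t p.2) := by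
  ext i j
  rw [Matrix.mul_diagonal, diagonal_mul]
  by_cases hij : ((i : ℕ) + 1, (j : ℕ) + 1) ∈ D <;> simp [fD, fDxi, hij, div_eq_mul_inv]

lemma fDxi_congr (n : ℕ) (D : Finset (ℕ × ℕ)) {ξ ξ' : ℕ × ℕ → ℂ}
    (h : ∀ p ∈ D, ξ p = ξ' p) : fDxi n D ξ = fDxi n D ξ' := by
  ext i j
  simp only [fDxi, of_apply]
  split_ifs with hij
  · exact h _ hij
  · rfl

lemma IsRP.lt_of_mem {n : ℕ} {D : Finset (ℕ × ℕ)} (hD : IsRP n D) {i j : ℕ}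
    (hij : (i, j) ∈ D) : j < i :=
  (Finset.mem_filter.mp (hD.1 hij)).2

noncomputable def chainProduct (D : Finset (ℕ × ℕ)) (ξ : ℕ × ℕ → ℂ) (i : ℕ) : ℂ :=
  if h : ∃ j, j < i ∧ (i, j) ∈ D then ξ (i, h.choose) * chainProduct D ξ h.choose else 1
termination_by i
decreasing_by exact h.choose_spec.1

lemma chainProduct_ne_zero {D : Finset (ℕ × ℕ)} {ξ : ℕ × ℕ → ℂ}
    (hξ : ∀ p ∈ D, ξ p ≠ 0) (i : ℕ) : chainProduct D ξ i ≠ 0 := by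
  induction i using Nat.strong_induction_on with
  | _ i ih =>
    rw [chainProduct]
    split
    · next h => exact mul_ne_zero (hξ _ h.choose_spec.2) (ih _ h.choose_spec.1)
    · exact one_ne_zero

lemma chainProduct_of_mem {n : ℕ} {D : Finset (ℕ × ℕ)} (hD : IsRP n D) (ξ : ℕ × ℕ → ℂ)
    {i j : ℕ} (hij : (i, j) ∈ D) : chainProduct D ξ i = ξ (i, j) * chainProduct D ξ j := by
  have h : ∃ j', j' < i ∧ (i, j') ∈ D := ⟨j, hD.lt_of_mem hij, hij⟩
  have hchoose : h.choose = j := by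
    by_contra hne
    exact (hD.2 _ h.choose_spec.2 _ hij (by simp [hne])).1 rfl
  rw [chainProduct, dif_pos h, hchoose]

lemma IsRP.exists_eq_div {n : ℕ} {D : Finset (ℕ × ℕ)} (hD : IsRP n D) {ξ : ℕ × ℕ → ℂ}
    (hξ : ∀ p ∈ D, ξ p ≠ 0) :
    ∃ t : ℕ → ℂ, (∀ k, t k ≠ 0) ∧ ∀ p ∈ D, ξ p = t p.1 / t p.2 := by
  refine ⟨chainProduct D ξ, chainProduct_ne_zero hξ, fun p hp => ?_⟩
  rw [chainProduct_of_mem hD ξ hp, mul_div_cancel_right₀ _ (chainProduct_ne_zero hξ _)]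

/-- Every `d : Fin n → ℂ` without zeros is the diagonal `k ↦ t ((k : ℕ) + 1)` of some `t : ℕ → ℂ`
without zeros (indices of `D` are 1-based). -/
lemma exists_shift_eq {n : ℕ} {d : Fin n → ℂ} (hd : ∀ k, d k ≠ 0) :
    ∃ t : ℕ → ℂ, (∀ m, t m ≠ 0) ∧ (fun k : Fin n => t ((k : ℕ) + 1)) = d := by
  have hinj : Function.Injective (fun k : Fin n => (k : ℕ) + 1) :=
    fun a b h => Fin.ext (Nat.add_right_cancel h)
  refine ⟨Function.extend (fun k : Fin n => (k : ℕ) + 1) d 1, fun m => ?_,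
    funext (hinj.extend_apply d 1)⟩
  by_cases hm : ∃ k : Fin n, (k : ℕ) + 1 = m
  · obtain ⟨k, rfl⟩ := hm
    rw [hinj.extend_apply]
    exact hd k
  · rw [Function.extend_apply' _ _ _ hm]
    exact one_ne_zero

lemma coact_mul_diagonal_fD {n : ℕ} (D : Finset (ℕ × ℕ)) (u : Matrix (Fin n) (Fin n) ℂ)
    {t : ℕ → ℂ} (ht : ∀ m, t m ≠ 0) :
    coact (u * diagonal (fun k : Fin n => t ((k : ℕ) + 1))) (fD n D)
      = coact u (fDxi n D (fun p => t p.1 / t p.2)) := by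
  rw [coact_mul_diagonal u _ (fun k => ht _), diagonal_mul_fD_mul_diagonal_inv]

theorem omega_eq_iUnion_theta_general (n : ℕ) (D : Finset (ℕ × ℕ)) (hD : IsRP n D) :
    Omega n D = ⋃ (ξ : ℕ × ℕ → ℂ) (_ : ∀ p ∈ D, ξ p ≠ 0), Theta n D ξ := by
  ext l
  simp only [Set.mem_iUnion]
  constructor
  · rintro ⟨b, hbU, hbT, rfl⟩
    obtain ⟨u, hu, hb⟩ := hbT.exists_isUnitri_mul_diagonal hbU
    obtain ⟨t, ht, htd⟩ := exists_shift_eq (hbT.diag_ne_zero hbU)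
    refine ⟨fun p => t p.1 / t p.2, fun p _ => div_ne_zero (ht _) (ht _), u, hu, ?_⟩
    rw [hb, ← htd, coact_mul_diagonal_fD D u ht]
  · rintro ⟨ξ, hξ, u, hu, rfl⟩
    obtain ⟨t, ht, hξt⟩ := hD.exists_eq_div hξ
    refine ⟨u * diagonal (fun k : Fin n => t ((k : ℕ) + 1)), ?_, hu.1.mul_diagonal _, ?_⟩
    · exact hu.isUnit.mul (isUnit_diagonal.mpr (Pi.isUnit_iff.mpr fun k => (ht _).isUnit))
    · rw [coact_mul_diagonal_fD D u ht, fDxi_congr n D hξt]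

/-- Lemma 1.3: for every rook placement `D`, the `B`-orbit of `f_D` is the union
over all maps `ξ : D → ℂ∖{0}` of the `U`-orbits `Θ_{D,ξ}`. -/
theorem omega_eq_iUnion_theta (n : ℕ) (hn : 1 ≤ n) (D : Finset (ℕ × ℕ)) (hD : IsRP n D) :
    Omega n D = ⋃ (ξ : ℕ × ℕ → ℂ) (_ : ∀ p ∈ D, ξ p ≠ 0), Theta n D ξ :=
  omega_eq_iUnion_theta_general n D hD
end

section
/- For every element u of the group U of upper unitriangular n×n complex matrices, every strictly lower-triangular n×n complex matrix f, and all 1 ≤ j < i ≤ n, one has rank π_{i,j}(u.f) = rank π_{i,j}(f). -/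
/-- `rank π_{i,j}(X)`: the rank of the submatrix of `X` on rows `i, i+1, …, n` and
columns `1, …, j` (1-based coordinates). -/
noncomputable def piRank {n : ℕ} (X : Matrix (Fin n) (Fin n) ℂ) (i j : ℕ) : ℕ :=
  (X.submatrix (fun r : {r : Fin n // i ≤ (r : ℕ) + 1} => (r : Fin n))
    (fun c : {c : Fin n // (c : ℕ) + 1 ≤ j} => (c : Fin n))).rank

/-! Since `j < i`, the block `π_{i,j}` lies strictly below the diagonal, so taking the lower part
does not affect it. Its rows form a final segment and its columns an initial segment, hence for
upper triangular `u` one has `π_{i,j}(u f u⁻¹) = u' π_{i,j}(f) v'`, where `u'` and `v'` are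
diagonal blocks of `u` and `u⁻¹`. These are unitriangular, hence invertible, so the rank is
unchanged. -/

namespace Matrix

variable {m R : Type*}

section Zero

variable [Zero R] {M : Matrix m m R}

theorem BlockTriangular.toBlock_eq_zero {α : Type*} [LT α] {b : m → α}
    (hM : M.BlockTriangular b) {p q : m → Prop} (h : ∀ i j, p i → q j → b j < b i) :
    M.toBlock p q = 0 := by
  ext i j
  exact hM (h i j i.2 j.2)

variable [LinearOrder m]

theorem IsUpperTriangular.toBlock_upperSet_compl_eq_zero (hM : M.IsUpperTriangular)
    {P : m → Prop} (hP : IsUpperSet {i | P i}) : M.toBlock P (fun j => ¬ P j) = 0 :=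
  hM.toBlock_eq_zero fun _ _ hi hj => lt_of_not_ge fun hij => hj (hP hij hi)

theorem IsUpperTriangular.toBlock_compl_lowerSet_eq_zero (hM : M.IsUpperTriangular)
    {S : m → Prop} (hS : IsLowerSet {i | S i}) : M.toBlock (fun i => ¬ S i) S = 0 :=
  hM.toBlock_eq_zero fun _ _ hi hj => lt_of_not_ge fun hij => hi (hS hij hj)

end Zero

section CommRing

variable [CommRing R]

theorem toBlock_mul_of_toBlock_compl_eq_zero_left {l n k : Type*} [Fintype n]
    {p : l → Prop} {q : n → Prop} [DecidablePred q] {r : k → Prop}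
    {A : Matrix l n R} {B : Matrix n k R} (hA : A.toBlock p (fun i => ¬ q i) = 0) :
    (A * B).toBlock p r = A.toBlock p q * B.toBlock q r := by
  rw [toBlock_mul_eq_add _ q, hA, Matrix.zero_mul, add_zero]

theorem toBlock_mul_of_toBlock_compl_eq_zero_right {l n k : Type*} [Fintype n]
    {p : l → Prop} {q : n → Prop} [DecidablePred q] {r : k → Prop}
    {A : Matrix l n R} {B : Matrix n k R} (hB : B.toBlock (fun i => ¬ q i) r = 0) :
    (A * B).toBlock p r = A.toBlock p q * B.toBlock q r := by
  rw [toBlock_mul_eq_add _ q, hB, Matrix.mul_zero, add_zero]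

variable [LinearOrder m] [Fintype m] {M : Matrix m m R}

theorem IsUpperTriangular.det_toBlock (hM : M.IsUpperTriangular) (p : m → Prop)
    [DecidablePred p] : (M.toBlock p p).det = ∏ i : {i // p i}, M i i :=
  det_of_isUpperTriangular fun _ _ h => hM h

theorem IsUpperTriangular.mul_apply_self {N : Matrix m m R} (hM : M.IsUpperTriangular)
    (hN : N.IsUpperTriangular) (i : m) : (M * N) i i = M i i * N i i := by
  rw [mul_apply, Finset.sum_eq_single i]
  · intro k _ hki
    rcases lt_or_gt_of_ne hki with hlt | hgt
    · rw [hM hlt, zero_mul]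
    · rw [hN hgt, mul_zero]
  · simp

theorem IsUpperTriangular.toBlock_mul_mul {u v X : Matrix m m R} (hu : u.IsUpperTriangular)
    (hv : v.IsUpperTriangular) {P S : m → Prop} [DecidablePred P] [DecidablePred S]
    (hP : IsUpperSet {i | P i}) (hS : IsLowerSet {i | S i}) :
    (u * X * v).toBlock P S = u.toBlock P P * X.toBlock P S * v.toBlock S S := by
  rw [toBlock_mul_of_toBlock_compl_eq_zero_right (hv.toBlock_compl_lowerSet_eq_zero hS),
    toBlock_mul_of_toBlock_compl_eq_zero_left (hu.toBlock_upperSet_compl_eq_zero hP)]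

end CommRing

end Matrix

open Matrix

section Unitriangular

variable {n : ℕ} {u : Matrix (Fin n) (Fin n) ℂ}

theorem IsUnitri.isUpperTriangular (hu : IsUnitri u) : u.IsUpperTriangular := hu.1

theorem IsUnitri.det_toBlock (hu : IsUnitri u) (p : Fin n → Prop) [DecidablePred p] :
    (u.toBlock p p).det = 1 := by
  simp [hu.isUpperTriangular.det_toBlock, hu.2]

theorem IsUnitri.inv (hu : IsUnitri u) : IsUnitri u⁻¹ := by
  have hdet : IsUnit u.det := by
    rw [det_of_isUpperTriangular hu.isUpperTriangular]
    simp [hu.2]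
  have : Invertible u := u.invertibleOfIsUnitDet hdet
  have hinv : u⁻¹.IsUpperTriangular := blockTriangular_inv_of_blockTriangular hu.isUpperTriangular
  refine ⟨hinv, fun i => ?_⟩
  calc u⁻¹ i i = (u⁻¹ * u) i i := by rw [hinv.mul_apply_self hu.isUpperTriangular, hu.2, mul_one]
    _ = 1 := by rw [nonsing_inv_mul u hdet, one_apply_eq]

theorem IsUnitri.rank_toBlock_conj (hu : IsUnitri u) (X : Matrix (Fin n) (Fin n) ℂ)
    {P S : Fin n → Prop} [DecidablePred P] [DecidablePred S]
    (hP : IsUpperSet {i | P i}) (hS : IsLowerSet {i | S i}) :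
    ((u * X * u⁻¹).toBlock P S).rank = (X.toBlock P S).rank := by
  rw [hu.isUpperTriangular.toBlock_mul_mul hu.inv.isUpperTriangular hP hS,
    rank_mul_eq_left_of_isUnit_det _ _ (by simp [hu.inv.det_toBlock]),
    rank_mul_eq_right_of_isUnit_det _ _ (by simp [hu.det_toBlock])]

theorem lowPart_toBlock (X : Matrix (Fin n) (Fin n) ℂ) {P S : Fin n → Prop}
    (h : ∀ r c, P r → S c → c < r) : (lowPart X).toBlock P S = X.toBlock P S := by
  ext r c
  simp only [toBlock_apply, lowPart, of_apply]
  exact if_pos (h r c r.2 c.2)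

end Unitriangular

theorem piRank_coact_unitriangular_general (n : ℕ) (u f : Matrix (Fin n) (Fin n) ℂ)
    (hu : IsUnitri u) (i j : ℕ) (h2 : j < i) :
    piRank (coact u f) i j = piRank f i j := by
  let P : Fin n → Prop := fun r => i ≤ (r : ℕ) + 1
  let S : Fin n → Prop := fun c => (c : ℕ) + 1 ≤ j
  have hP : IsUpperSet {r | P r} := fun _ _ hab ha => ha.trans (Nat.add_le_add_right hab 1)
  have hS : IsLowerSet {c | S c} := fun _ _ hab ha => (Nat.add_le_add_right hab 1).trans ha
  have hPS : ∀ r c, P r → S c → c < r := fun r c hr hc => by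
    simp only [P, S] at hr hc
    omega
  change ((coact u f).toBlock P S).rank = (f.toBlock P S).rank
  rw [coact, lowPart_toBlock _ hPS, hu.rank_toBlock_conj f hP hS]

/-- For every `u ∈ U`, every strictly lower-triangular `f`, and all `1 ≤ j < i ≤ n`,
`rank π_{i,j}(u.f) = rank π_{i,j}(f)`. -/
theorem piRank_coact_unitriangular (n : ℕ) (u f : Matrix (Fin n) (Fin n) ℂ)
    (hu : IsUnitri u) (hf : ∀ a b : Fin n, ¬ ((b : ℕ) < (a : ℕ)) → f a b = 0)
    (i j : ℕ) (h1 : 1 ≤ j) (h2 : j < i) (h3 : i ≤ n) :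
    piRank (coact u f) i j = piRank f i j :=
  piRank_coact_unitriangular_general n u f hu i j h2
end

section
/- For every rook placement D ⊆ Φ⁺, every λ ∈ Ω_D, and all 1 ≤ j < i ≤ n, one has rank π_{i,j}(λ) = (R_D)_{i,j}. -/
/-- The rank matrix: `(R_D)_{i,j} = #{(p,q) ∈ D : p ≥ i, q ≤ j}` for `i > j`, else `0`. -/
def RD (D : Finset (ℕ × ℕ)) (i j : ℕ) : ℕ :=
  if j < i then (D.filter (fun p => i ≤ p.1 ∧ p.2 ≤ j)).card else 0

/-- The partial order on rook placements: `D ≤ D'` iff `R_D ≤ R_{D'}` entrywise. -/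
def rpLE (D D' : Finset (ℕ × ℕ)) : Prop := ∀ i j, RD D i j ≤ RD D' i j

/-- Strict version of the order on rook placements. -/
def rpLT (D D' : Finset (ℕ × ℕ)) : Prop := rpLE D D' ∧ D ≠ D'
open Matrix

lemma Fintype.sum_subtype_of_eq_zero {α M : Type*} [Fintype α] [AddCommMonoid M]
    {p : α → Prop} [DecidablePred p] (f : α → M) (hf : ∀ x, ¬ p x → f x = 0) :
    ∑ x : Subtype p, f x = ∑ x, f x := by
  rw [← Fintype.sum_subtype_add_sum_subtype p f,
    Finset.sum_eq_zero fun (x : {x // ¬ p x}) _ => hf x x.2, add_zero]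

namespace Matrix

section Triangular

variable {m n ι R : Type*} [Fintype m] [LinearOrder m] [CommRing R]

theorem IsUpperTriangular.submatrix_mul_of_monotone {A : Matrix m m R} (hA : A.IsUpperTriangular)
    (Y : Matrix m n R) {p : m → Prop} [DecidablePred p] (hp : Monotone p) (c : ι → n) :
    (A * Y).submatrix (Subtype.val : Subtype p → m) c =
      A.submatrix (Subtype.val : Subtype p → m) (Subtype.val : Subtype p → m) *
        Y.submatrix (Subtype.val : Subtype p → m) c := by
  ext r k
  simp only [submatrix_apply, mul_apply]
  refine (Fintype.sum_subtype_of_eq_zero _ fun x hx => ?_).symm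
  rw [hA (lt_of_not_ge fun h => hx (hp h r.2)), zero_mul]

theorem IsUpperTriangular.mul_submatrix_of_antitone {C : Matrix m m R} (hC : C.IsUpperTriangular)
    (Y : Matrix n m R) {q : m → Prop} [DecidablePred q] (hq : Antitone q) (r : ι → n) :
    (Y * C).submatrix r (Subtype.val : Subtype q → m) =
      Y.submatrix r (Subtype.val : Subtype q → m) *
        C.submatrix (Subtype.val : Subtype q → m) (Subtype.val : Subtype q → m) := by
  ext x k
  simp only [submatrix_apply, mul_apply]
  refine (Fintype.sum_subtype_of_eq_zero _ fun y hy => ?_).symm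
  rw [hC (lt_of_not_ge fun h => hy (hq h k.2)), mul_zero]

theorem IsUpperTriangular.det_submatrix_ne_zero [IsDomain R] {A : Matrix m m R}
    (hA : A.IsUpperTriangular) (hdet : A.det ≠ 0) (p : m → Prop) [DecidablePred p] :
    (A.submatrix (Subtype.val : Subtype p → m) Subtype.val).det ≠ 0 := by
  rw [det_of_isUpperTriangular hA, Finset.prod_ne_zero_iff] at hdet
  have hsub : (A.submatrix (Subtype.val : Subtype p → m) Subtype.val).IsUpperTriangular :=
    hA.submatrix
  rw [det_of_isUpperTriangular hsub, Finset.prod_ne_zero_iff]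
  exact fun x _ => hdet x (Finset.mem_univ _)

theorem rank_submatrix_mul_mul_of_isUpperTriangular [IsDomain R] [Fintype n] [LinearOrder n]
    {A : Matrix m m R} {C : Matrix n n R} (hA : A.IsUpperTriangular) (hC : C.IsUpperTriangular)
    (hAdet : A.det ≠ 0) (hCdet : C.det ≠ 0) (X : Matrix m n R)
    {p : m → Prop} {q : n → Prop} [DecidablePred p] [DecidablePred q]
    (hp : Monotone p) (hq : Antitone q) :
    ((A * X * C).submatrix (Subtype.val : Subtype p → m) (Subtype.val : Subtype q → n)).rank =
      (X.submatrix (Subtype.val : Subtype p → m) (Subtype.val : Subtype q → n)).rank := by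
  rw [hC.mul_submatrix_of_antitone _ hq, hA.submatrix_mul_of_monotone _ hp,
    rank_mul_eq_left_of_det_ne_zero _ _ (hC.det_submatrix_ne_zero hCdet q),
    rank_mul_eq_right_of_det_ne_zero _ _ (hA.det_submatrix_ne_zero hAdet p)]

end Triangular

theorem rank_of_injOn_fst_of_injOn_snd {m n R : Type*} [Fintype m] [Fintype n] [DecidableEq m]
    [DecidableEq n] [CommRing R] [StrongRankCondition R] {S : Finset (m × n)}
    (hfst : Set.InjOn Prod.fst (S : Set (m × n))) (hsnd : Set.InjOn Prod.snd (S : Set (m × n))) :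
    (of fun r c => if (r, c) ∈ S then (1 : R) else 0).rank = S.card := by
  set ρ : S → m := fun x => x.1.1
  set γ : S → n := fun x => x.1.2
  have hρ : Function.Injective ρ := fun x y h => Subtype.ext (hfst x.2 y.2 h)
  have hγ : Function.Injective γ := fun x y h => Subtype.ext (hsnd x.2 y.2 h)
  have hfactor : (of fun r c => if (r, c) ∈ S then (1 : R) else 0) =
      (1 : Matrix m m R).submatrix id ρ * (1 : Matrix n n R).submatrix γ id := by
    ext r c
    have hpos : ∀ x : m × n, (r = x.1 ∧ x.2 = c) ↔ (r, c) = x := by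
      simp [Prod.ext_iff, eq_comm]
    simp only [of_apply, mul_apply, submatrix_apply, one_apply, id, ρ, γ, ite_mul, one_mul,
      zero_mul]
    rw [Finset.sum_coe_sort S (fun x => if r = x.1 then if x.2 = c then (1 : R) else 0 else 0)]
    simp only [← ite_and, hpos, Finset.sum_ite_eq]
  rw [hfactor]
  refine le_antisymm ((rank_mul_le_left _ _).trans
    ((rank_le_card_width _).trans (Fintype.card_coe S).le)) ?_
  calc S.card = (1 : Matrix S S R).rank := by rw [rank_one, Fintype.card_coe]
    _ = ((1 : Matrix m m R).submatrix ρ id *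
          ((1 : Matrix m m R).submatrix id ρ * (1 : Matrix n n R).submatrix γ id) *
          (1 : Matrix n n R).submatrix id γ).rank := by
      rw [← Matrix.mul_assoc, ← submatrix_mul _ _ _ _ _ Function.bijective_id, Matrix.mul_assoc,
        ← submatrix_mul _ _ _ _ _ Function.bijective_id, Matrix.one_mul, Matrix.one_mul,
        submatrix_one _ hρ, submatrix_one _ hγ, Matrix.one_mul]
    _ ≤ _ := (rank_mul_le_left _ _).trans (rank_mul_le_right _ _)

end Matrix

section RookPlacement

variable {n : ℕ} {D : Finset (ℕ × ℕ)}

lemma IsRP.injOn_fst (hD : IsRP n D) : Set.InjOn Prod.fst (D : Set (ℕ × ℕ)) :=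
  fun p hp q hq h => by_contra fun hne => (hD.2 p hp q hq hne).1 h

lemma IsRP.injOn_snd (hD : IsRP n D) : Set.InjOn Prod.snd (D : Set (ℕ × ℕ)) :=
  fun p hp q hq h => by_contra fun hne => (hD.2 p hp q hq hne).2 h

lemma IsRP.bounds_of_mem (hD : IsRP n D) {p : ℕ × ℕ} (hp : p ∈ D) :
    1 ≤ p.2 ∧ p.2 < p.1 ∧ p.1 ≤ n := by
  have h := hD.1 hp
  simp only [PhiPos, Finset.mem_filter, Finset.mem_product, Finset.mem_Icc] at h
  omega

theorem rank_fD_submatrix (hD : IsRP n D) (i j : ℕ) :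
    ((fD n D).submatrix (fun r : {r : Fin n // i ≤ (r : ℕ) + 1} => (r : Fin n))
      (fun c : {c : Fin n // (c : ℕ) + 1 ≤ j} => (c : Fin n))).rank =
      (D.filter fun p => i ≤ p.1 ∧ p.2 ≤ j).card := by
  classical
  set φ : {r : Fin n // i ≤ (r : ℕ) + 1} × {c : Fin n // (c : ℕ) + 1 ≤ j} → ℕ × ℕ :=
    fun x => (((x.1 : Fin n) : ℕ) + 1, ((x.2 : Fin n) : ℕ) + 1)
  have hφ : Function.Injective φ := fun x y h => by
    simp only [φ, Prod.mk.injEq, add_left_inj] at h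
    exact Prod.ext (Subtype.ext (Fin.ext h.1)) (Subtype.ext (Fin.ext h.2))
  set S := Finset.univ.filter fun x => φ x ∈ D
  have hentries : (fD n D).submatrix (fun r : {r : Fin n // i ≤ (r : ℕ) + 1} => (r : Fin n))
      (fun c : {c : Fin n // (c : ℕ) + 1 ≤ j} => (c : Fin n)) =
      Matrix.of fun r c => if (r, c) ∈ S then 1 else 0 := by
    ext r c
    simp [fD, S, φ]
  have hS : ∀ {x}, x ∈ S → φ x ∈ D := fun hx => (Finset.mem_filter.1 hx).2
  rw [hentries, Matrix.rank_of_injOn_fst_of_injOn_snd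
    (fun x hx y hy h => hφ (hD.injOn_fst (hS hx) (hS hy) (by simp [φ, h])))
    (fun x hx y hy h => hφ (hD.injOn_snd (hS hx) (hS hy) (by simp [φ, h])))]
  refine Finset.card_bij (fun x _ => φ x) (fun x hx => ?_) (fun x _ y _ h => hφ h) ?_
  · exact Finset.mem_filter.2 ⟨hS hx, x.1.2, x.2.2⟩
  · intro p hp
    obtain ⟨hpD, hi, hj⟩ := Finset.mem_filter.1 hp
    have hb := hD.bounds_of_mem hpD
    let x : {r : Fin n // i ≤ (r : ℕ) + 1} × {c : Fin n // (c : ℕ) + 1 ≤ j} :=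
      (⟨⟨p.1 - 1, by omega⟩, by simp only; omega⟩, ⟨⟨p.2 - 1, by omega⟩, by simp only; omega⟩)
    have hx : φ x = p := Prod.ext (by simp only [φ, x]; omega) (by simp only [φ, x]; omega)
    exact ⟨x, Finset.mem_filter.2 ⟨Finset.mem_univ _, hx ▸ hpD⟩, hx⟩

end RookPlacement

lemma lowPart_submatrix_of_lt {n : ℕ} (X : Matrix (Fin n) (Fin n) ℂ) {p q : Fin n → Prop}
    (h : ∀ r c, p r → q c → c < r) :
    (lowPart X).submatrix (Subtype.val : Subtype p → Fin n) (Subtype.val : Subtype q → Fin n) =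
      X.submatrix Subtype.val Subtype.val := by
  ext r c
  exact if_pos (h r c r.2 c.2)

theorem piRank_mem_omega_general (n : ℕ) (D : Finset (ℕ × ℕ)) (hD : IsRP n D)
    (l : Matrix (Fin n) (Fin n) ℂ) (hl : l ∈ Omega n D)
    (i j : ℕ) (h2 : j < i) :
    piRank l i j = RD D i j := by
  obtain ⟨b, hb_unit, hb_tri, rfl⟩ := hl
  have hb : b.IsUpperTriangular := hb_tri
  have hb_det : IsUnit b.det := (isUnit_iff_isUnit_det b).1 hb_unit
  have : Invertible b := b.invertibleOfIsUnitDet hb_det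
  have hb_inv : b⁻¹.IsUpperTriangular := blockTriangular_inv_of_blockTriangular hb
  rw [piRank, coact, lowPart_submatrix_of_lt _ fun r c hr hc => by omega,
    rank_submatrix_mul_mul_of_isUpperTriangular hb hb_inv hb_det.ne_zero
      (isUnit_nonsing_inv_det b hb_det).ne_zero _ (fun r r' h hr => by omega)
      (fun c c' h hc => by omega),
    rank_fD_submatrix hD, RD, if_pos h2]

/-- For every rook placement `D`, every `λ ∈ Ω_D`, and all `1 ≤ j < i ≤ n`,
`rank π_{i,j}(λ) = (R_D)_{i,j}`. -/
theorem piRank_mem_omega (n : ℕ) (D : Finset (ℕ × ℕ)) (hD : IsRP n D)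
    (l : Matrix (Fin n) (Fin n) ℂ) (hl : l ∈ Omega n D)
    (i j : ℕ) (h1 : 1 ≤ j) (h2 : j < i) (h3 : i ≤ n) :
    piRank l i j = RD D i j :=
  piRank_mem_omega_general n D hD l hl i j h2
end

section
/- Let D, D' ⊆ Φ⁺ be rook placements. If Ω_D is contained in the closure of Ω_{D'}, then D ≤ D', i.e. (R_D)_{i,j} ≤ (R_{D'})_{i,j} for all i, j. -/
/-! For `j < i` the corner `π_{i,j}` lies strictly below the diagonal, so it does not see the
truncation in `b.λ = (b λ b⁻¹)_low`; and for upper-triangular `b`, the rows `≥ i` of `b λ b⁻¹`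
only involve rows `≥ i` of `λ`, its columns `≤ j` only columns `≤ j` of `λ`. Hence
`π_{i,j}(b.λ) = b' π_{i,j}(λ) c'` and `rank π_{i,j} ≤ (R_{D'})_{i,j}` on `Ω_{D'}`; as rank is
lower semicontinuous, the bound persists on the closure. At `f_D ∈ Ω_D` the rank of `π_{i,j}` is
`(R_D)_{i,j}`, because the rooks of `D` in that corner form an identity minor.
-/

open Matrix

theorem Matrix.isClosed_setOf_rank_le {𝕜 m n : Type*} [NontriviallyNormedField 𝕜]
    [CompleteSpace 𝕜] [Fintype m] [Fintype n] [DecidableEq n] (r : ℕ) :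
    IsClosed {A : Matrix m n 𝕜 | A.rank ≤ r} := by
  let toCLM : Matrix m n 𝕜 →ₗ[𝕜] (n → 𝕜) →L[𝕜] (m → 𝕜) :=
    LinearMap.toContinuousLinearMap.toLinearMap ∘ₗ Matrix.toLin'.toLinearMap
  have hrank (A : Matrix m n 𝕜) : (toCLM A : (n → 𝕜) →ₗ[𝕜] (m → 𝕜)).rank = A.rank := by
    simp only [toCLM, LinearMap.rank, Matrix.rank, ← Module.finrank_eq_rank]
    rfl
  have hopen := (isOpen_setOfPred_nat_le_rank (𝕜 := 𝕜) (E := n → 𝕜) (F := m → 𝕜)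
    (r + 1)).preimage toCLM.continuous_of_finiteDimensional
  rw [← isOpen_compl_iff]
  convert hopen using 1
  refine Set.ext fun A => ?_
  simp only [Set.mem_compl_iff, Set.mem_ofPred_eq, Set.mem_preimage, hrank, not_le, Nat.cast_le]
  omega

lemma mem_PhiPos {n : ℕ} {p : ℕ × ℕ} : p ∈ PhiPos n ↔ 1 ≤ p.2 ∧ p.2 < p.1 ∧ p.1 ≤ n := by
  simp only [PhiPos, Finset.mem_filter, Finset.mem_product, Finset.mem_Icc]
  omega

lemma RD_of_lt (D : Finset (ℕ × ℕ)) {i j : ℕ} (hij : j < i) :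
    RD D i j = (D.filter fun p => i ≤ p.1 ∧ p.2 ≤ j).card :=
  if_pos hij

namespace IsRP

variable {n : ℕ} {D E : Finset (ℕ × ℕ)}

lemma mono (hD : IsRP n D) (hED : E ⊆ D) : IsRP n E :=
  ⟨hED.trans hD.1, fun p hp q hq => hD.2 p (hED hp) q (hED hq)⟩

lemma eq_of_mem_row_col (hD : IsRP n D) {p q : ℕ × ℕ} (hp : p ∈ D) (hq : q ∈ D)
    (hpq : (p.1, q.2) ∈ D) : p = q := by
  have hp' : (p.1, q.2) = p := by_contra fun h => (hD.2 _ hpq _ hp h).1 rfl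
  have hq' : (p.1, q.2) = q := by_contra fun h => (hD.2 _ hpq _ hq h).2 rfl
  exact hp'.symm.trans hq'

end IsRP

lemma IsUpperTri.inv {n : ℕ} {b : Matrix (Fin n) (Fin n) ℂ} (hb : IsUpperTri b) :
    IsUpperTri b⁻¹ := by
  by_cases hdet : IsUnit b.det
  · have := b.invertibleOfIsUnitDet hdet
    have hupper : b.IsUpperTriangular := fun p q h => hb p q h
    exact fun p q hpq => blockTriangular_inv_of_blockTriangular hupper hpq
  · simp [b.nonsing_inv_apply_not_isUnit hdet, IsUpperTri]

section Corner

variable {n : ℕ}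

noncomputable def rowsFrom (n i : ℕ) : Matrix (Fin n) (Fin n) ℂ :=
  diagonal fun p => if i ≤ (p : ℕ) + 1 then 1 else 0

noncomputable def colsUpTo (n j : ℕ) : Matrix (Fin n) (Fin n) ℂ :=
  diagonal fun q => if (q : ℕ) + 1 ≤ j then 1 else 0

/-- `π_{i,j}(X)`, padded with zeros to an `n × n` matrix (which keeps its rank). -/
noncomputable def corner (i j : ℕ) (X : Matrix (Fin n) (Fin n) ℂ) : Matrix (Fin n) (Fin n) ℂ :=
  rowsFrom n i * X * colsUpTo n j

lemma corner_apply (i j : ℕ) (X : Matrix (Fin n) (Fin n) ℂ) (p q : Fin n) :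
    corner i j X p q = if i ≤ (p : ℕ) + 1 ∧ (q : ℕ) + 1 ≤ j then X p q else 0 := by
  simp only [corner, rowsFrom, colsUpTo, mul_diagonal, diagonal_mul]
  split_ifs <;> first | tauto | ring

lemma continuous_corner (i j : ℕ) : Continuous (corner (n := n) i j) :=
  (continuous_const.matrix_mul continuous_id).matrix_mul continuous_const

lemma corner_lowPart {i j : ℕ} (hij : j < i) (X : Matrix (Fin n) (Fin n) ℂ) :
    corner i j (lowPart X) = corner i j X := by
  ext p q
  simp only [corner_apply, lowPart, of_apply]
  split_ifs <;> first | rfl | omega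

lemma rowsFrom_mul_of_isUpperTri (i : ℕ) {b : Matrix (Fin n) (Fin n) ℂ} (hb : IsUpperTri b) :
    rowsFrom n i * b = rowsFrom n i * b * rowsFrom n i := by
  ext p q
  simp only [rowsFrom, mul_diagonal, diagonal_mul]
  by_cases hp : i ≤ (p : ℕ) + 1 <;> by_cases hq : i ≤ (q : ℕ) + 1
  all_goals simp only [hp, hq, if_true, if_false, mul_one, mul_zero, zero_mul, one_mul]
  exact hb p q (by omega)

lemma mul_colsUpTo_of_isUpperTri (j : ℕ) {c : Matrix (Fin n) (Fin n) ℂ} (hc : IsUpperTri c) :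
    c * colsUpTo n j = colsUpTo n j * c * colsUpTo n j := by
  ext p q
  simp only [colsUpTo, mul_diagonal, diagonal_mul]
  by_cases hp : (p : ℕ) + 1 ≤ j <;> by_cases hq : (q : ℕ) + 1 ≤ j
  all_goals simp only [hp, hq, if_true, if_false, mul_one, mul_zero, zero_mul, one_mul]
  exact hc p q (by omega)

lemma corner_mul_mul {b c : Matrix (Fin n) (Fin n) ℂ} (hb : IsUpperTri b) (hc : IsUpperTri c)
    (i j : ℕ) (X : Matrix (Fin n) (Fin n) ℂ) :
    corner i j (b * X * c) = (rowsFrom n i * b) * corner i j X * (c * colsUpTo n j) := by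
  calc corner i j (b * X * c) = (rowsFrom n i * b) * X * (c * colsUpTo n j) := by
        simp only [corner, Matrix.mul_assoc]
    _ = (rowsFrom n i * b * rowsFrom n i) * X * (colsUpTo n j * c * colsUpTo n j) := by
        rw [← rowsFrom_mul_of_isUpperTri i hb, ← mul_colsUpTo_of_isUpperTri j hc]
    _ = _ := by simp only [corner, Matrix.mul_assoc]

lemma rank_corner_coact_le {i j : ℕ} (hij : j < i) {b : Matrix (Fin n) (Fin n) ℂ}
    (hb : IsUpperTri b) (X : Matrix (Fin n) (Fin n) ℂ) :
    (corner i j (coact b X)).rank ≤ (corner i j X).rank := by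
  rw [coact, corner_lowPart hij, corner_mul_mul hb hb.inv]
  exact (rank_mul_le_left _ _).trans (rank_mul_le_right _ _)

end Corner

section RookMatrix

variable {n : ℕ}

lemma corner_fD (i j : ℕ) (E : Finset (ℕ × ℕ)) :
    corner i j (fD n E) = fD n (E.filter fun p => i ≤ p.1 ∧ p.2 ≤ j) := by
  ext p q
  simp only [corner_apply, fD, of_apply, Finset.mem_filter]
  split_ifs <;> tauto

lemma rank_fD_le (E : Finset (ℕ × ℕ)) : (fD n E).rank ≤ E.card := by
  classical
  let rows := Finset.univ.filter fun p : Fin n => (p : ℕ) + 1 ∈ E.image Prod.fst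
  have hsupp : Function.support (fD n E).row ⊆ rows := by
    intro p hp
    obtain ⟨q, hq⟩ := Function.ne_iff.mp hp
    have hmem : ((p : ℕ) + 1, (q : ℕ) + 1) ∈ E := by
      by_contra h
      simp [fD, h] at hq
    simpa [rows] using ⟨_, hmem⟩
  have hcard : rows.card ≤ (E.image Prod.fst).card :=
    Finset.card_le_card_of_injOn (fun p => (p : ℕ) + 1) (fun p hp => (Finset.mem_filter.mp hp).2)
      (fun p _ q _ h => Fin.ext (by simpa using h))
  exact (rank_le_card_of_support_subset _ _ hsupp).trans (hcard.trans Finset.card_image_le)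

lemma card_le_rank_fD {E : Finset (ℕ × ℕ)} (hE : IsRP n E) : E.card ≤ (fD n E).rank := by
  have hbound (x : E) : 1 ≤ x.1.2 ∧ x.1.2 < x.1.1 ∧ x.1.1 ≤ n := mem_PhiPos.mp (hE.1 x.2)
  let e := E.equivFin.symm
  let row (a : Fin E.card) : Fin n := ⟨(e a).1.1 - 1, by have := hbound (e a); omega⟩
  let col (a : Fin E.card) : Fin n := ⟨(e a).1.2 - 1, by have := hbound (e a); omega⟩
  have hminor : (fD n E).submatrix row col = 1 := by
    ext a b
    have hrow : (row a : ℕ) + 1 = (e a).1.1 := by have := hbound (e a); simp only [row]; omega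
    have hcol : (col b : ℕ) + 1 = (e b).1.2 := by have := hbound (e b); simp only [col]; omega
    simp only [submatrix_apply, fD, of_apply, hrow, hcol, one_apply]
    by_cases hab : a = b
    · simp [hab]
    · refine (if_neg fun hmem => hab ?_).trans (if_neg hab).symm
      exact e.injective (Subtype.ext (hE.eq_of_mem_row_col (e a).2 (e b).2 hmem))
  calc E.card = (1 : Matrix (Fin E.card) (Fin E.card) ℂ).rank := by
        rw [rank_one, Fintype.card_fin]
    _ = ((fD n E).submatrix row col).rank := by rw [hminor]
    _ ≤ (fD n E).rank := rank_submatrix_le _ _ _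

lemma lowPart_fD {D : Finset (ℕ × ℕ)} (hD : D ⊆ PhiPos n) : lowPart (fD n D) = fD n D := by
  ext p q
  simp only [lowPart, fD, of_apply]
  by_cases hmem : ((p : ℕ) + 1, (q : ℕ) + 1) ∈ D
  · have := (mem_PhiPos.mp (hD hmem)).2.1
    simp only [hmem, if_true, if_pos (show (q : ℕ) < p by omega)]
  · simp only [hmem, if_false, ite_self]

lemma fD_mem_Omega {D : Finset (ℕ × ℕ)} (hD : D ⊆ PhiPos n) : fD n D ∈ Omega n D :=
  ⟨1, isUnit_one, fun p q hpq => one_apply_ne (Fin.ne_of_val_ne (by omega)), by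
    simp [coact, lowPart_fD hD]⟩

end RookMatrix

section RankBounds

variable {n : ℕ} {i j : ℕ}

lemma RD_le_rank_corner_fD {D : Finset (ℕ × ℕ)} (hD : IsRP n D) (hij : j < i) :
    RD D i j ≤ (corner i j (fD n D)).rank := by
  rw [RD_of_lt D hij, corner_fD]
  exact card_le_rank_fD (hD.mono (Finset.filter_subset _ _))

lemma rank_corner_le_RD_of_mem_Omega {D : Finset (ℕ × ℕ)} (hij : j < i)
    {l : Matrix (Fin n) (Fin n) ℂ} (hl : l ∈ Omega n D) : (corner i j l).rank ≤ RD D i j := by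
  obtain ⟨b, -, hb, rfl⟩ := hl
  calc (corner i j (coact b (fD n D))).rank ≤ (corner i j (fD n D)).rank :=
        rank_corner_coact_le hij hb _
    _ ≤ RD D i j := by rw [RD_of_lt D hij, corner_fD]; exact rank_fD_le _

lemma rank_corner_le_RD_of_mem_closure_Omega {D : Finset (ℕ × ℕ)} (hij : j < i)
    {l : Matrix (Fin n) (Fin n) ℂ} (hl : l ∈ closure (Omega n D)) :
    (corner i j l).rank ≤ RD D i j :=
  closure_minimal (fun _ hl' => rank_corner_le_RD_of_mem_Omega hij hl')
    ((isClosed_setOf_rank_le _).preimage (continuous_corner i j)) hl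

end RankBounds

theorem rpLE_of_omega_subset_closure_general (n : ℕ) (D D' : Finset (ℕ × ℕ))
    (hD : IsRP n D)
    (h : Omega n D ⊆ closure (Omega n D')) :
    rpLE D D' := by
  intro i j
  by_cases hij : j < i
  · calc RD D i j ≤ (corner i j (fD n D)).rank := RD_le_rank_corner_fD hD hij
      _ ≤ RD D' i j := rank_corner_le_RD_of_mem_closure_Omega hij (h (fD_mem_Omega hD.1))
  · simp [RD, hij]

/-- Theorem 1.5: if `Ω_D` is contained in the closure of `Ω_{D'}`, then `D ≤ D'`,
i.e. `(R_D)_{i,j} ≤ (R_{D'})_{i,j}` for all `i, j`. -/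
theorem rpLE_of_omega_subset_closure (n : ℕ) (D D' : Finset (ℕ × ℕ))
    (hD : IsRP n D) (hD' : IsRP n D')
    (h : Omega n D ⊆ closure (Omega n D')) :
    rpLE D D' :=
  rpLE_of_omega_subset_closure_general n D D' hD h
end

section
/- Let D, D' ⊆ Φ⁺ be rook placements. If the rank matrices coincide, R_D = R_{D'}, then D = D'. -/
/-!
A subset of `Φ⁺` is recovered from its rank matrix by a second finite difference: for
`1 ≤ j < i`, the point `(i, j)` lies in `D` exactly when
`R(i, j) + R(i+1, j-1) - R(i+1, j) - R(i, j-1) = 1`, and all four entries involved sit strictly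
below the diagonal, where `R` really counts points.
-/

theorem RD_add_RD_eq (D : Finset (ℕ × ℕ)) {i j : ℕ} (hji : j + 1 < i) :
    RD D i (j + 1) + RD D (i + 1) j
      = (if (i, j + 1) ∈ D then 1 else 0) + RD D (i + 1) (j + 1) + RD D i j := by
  rw [← Finset.sum_ite_eq' D (i, j + 1) (fun _ => 1)]
  simp only [RD, if_pos hji, if_pos (by omega : j + 1 < i + 1), if_pos (by omega : j < i + 1),
    if_pos (by omega : j < i), Finset.card_filter, ← Finset.sum_add_distrib]
  refine Finset.sum_congr rfl fun p _ => ?_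
  obtain ⟨a, b⟩ := p
  simp only [Prod.mk.injEq]
  split_ifs <;> omega

theorem mem_of_RD_eq {n : ℕ} {D D' : Finset (ℕ × ℕ)} (hD : D ⊆ PhiPos n)
    (h : ∀ i j, RD D i j = RD D' i j) {p : ℕ × ℕ} (hp : p ∈ D) : p ∈ D' := by
  obtain ⟨a, b⟩ := p
  have hab := hD hp
  simp only [PhiPos, Finset.mem_filter, Finset.mem_product, Finset.mem_Icc] at hab
  obtain ⟨j, rfl⟩ : ∃ j, b = j + 1 := ⟨b - 1, by omega⟩
  have hD_eq := RD_add_RD_eq D (i := a) (j := j) hab.2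
  have hD'_eq := RD_add_RD_eq D' (i := a) (j := j) hab.2
  simp only [h, if_pos hp] at hD_eq
  by_contra hp'
  simp only [if_neg hp'] at hD'_eq
  omega

/-- If the rank matrices of two rook placements coincide, the placements are equal. -/
theorem rp_eq_of_rank_eq (n : ℕ) (D D' : Finset (ℕ × ℕ))
    (hD : IsRP n D) (hD' : IsRP n D')
    (h : ∀ i j, RD D i j = RD D' i j) :
    D = D' :=
  Finset.Subset.antisymm (fun _ => mem_of_RD_eq hD.1 h)
    (fun _ => mem_of_RD_eq hD'.1 fun i j => (h i j).symm)
end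

section
/- For every rook placement D ⊆ Φ⁺, the subspace 𝔭 is a Lie subalgebra of 𝔫, i.e. 𝔭 is closed under the commutator [x,y] = xy − yx. -/
/-- The set `M = M_{j_1} ∪ … ∪ M_{j_s}` associated with a rook placement `D`:
columns `j` are processed in increasing order, and for the rook `(i,j)` of `D` in
column `j` (if any) one adds `M_j = {(i,q) : j < q < i, (q,j) ∉ (previous M's)}`. -/
def Mset (n : ℕ) (D : Finset (ℕ × ℕ)) : Finset (ℕ × ℕ) :=
  (List.range (n + 1)).foldl
    (fun acc j =>
      acc ∪ (D.filter (fun p => p.2 = j)).biUnion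
        (fun p => ((Finset.Ioo j p.1).filter (fun q => (q, j) ∉ acc)).image
          (fun q => (p.1, q))))
    ∅

/-- Membership in the subspace `𝔭 ⊆ 𝔫`, the linear span of the matrix units
`e_{j,i}` with `(i,j) ∈ Φ⁺ ∖ M`: a matrix lies in `𝔭` iff it is strictly
upper-triangular and vanishes at every position coming from `M`. -/
def inP (n : ℕ) (D : Finset (ℕ × ℕ)) (x : Matrix (Fin n) (Fin n) ℂ) : Prop :=
  ∀ a b : Fin n, (¬ a < b ∨ ((b : ℕ) + 1, (a : ℕ) + 1) ∈ Mset n D) → x a b = 0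

theorem Matrix.mul_apply_eq_zero_of_split {ι R : Type*} [Fintype ι]
    [NonUnitalNonAssocSemiring R] {S : ι → ι → Prop} (hS : ∀ a b c, S a b → S a c ∨ S c b)
    {x y : Matrix ι ι R} (hx : ∀ a b, S a b → x a b = 0) (hy : ∀ a b, S a b → y a b = 0)
    {a b : ι} (hab : S a b) : (x * y) a b = 0 :=
  Finset.sum_eq_zero fun c _ => (hS a b c hab).elim
    (fun h => by simp [hx a c h]) (fun h => by simp [hy c b h])

namespace Mset

variable (D : Finset (ℕ × ℕ))

def step (acc : Finset (ℕ × ℕ)) (j : ℕ) : Finset (ℕ × ℕ) :=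
  acc ∪ (D.filter (fun p => p.2 = j)).biUnion
    (fun p => ((Finset.Ioo j p.1).filter (fun q => (q, j) ∉ acc)).image
      (fun q => (p.1, q)))

/-- The part of `M` built from the columns `j < k`. -/
def upTo : ℕ → Finset (ℕ × ℕ)
  | 0 => ∅
  | k + 1 => step D (upTo k) k

theorem foldl_range_step (k : ℕ) : (List.range k).foldl (step D) ∅ = upTo D k := by
  induction k with
  | zero => rfl
  | succ k ih => rw [List.range_succ, List.foldl_append, ih]; rfl

theorem eq_upTo (n : ℕ) : Mset n D = upTo D (n + 1) :=
  foldl_range_step D (n + 1)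

theorem upTo_mono : Monotone (upTo D) :=
  monotone_nat_of_le_succ fun _ => Finset.subset_union_left

variable {D}

theorem mem_upTo_succ {i j q : ℕ} (hD : (i, j) ∈ D) (hjq : j < q) (hqi : q < i)
    (hq : (q, j) ∉ upTo D j) : (i, q) ∈ upTo D (j + 1) :=
  Finset.mem_union_right _ <| Finset.mem_biUnion.2 ⟨(i, j), Finset.mem_filter.2 ⟨hD, rfl⟩,
    Finset.mem_image.2 ⟨q, Finset.mem_filter.2 ⟨Finset.mem_Ioo.2 ⟨hjq, hqi⟩, hq⟩, rfl⟩⟩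

theorem mem_upTo_of_lt {i j q k : ℕ} (hD : (i, j) ∈ D) (hjq : j < q) (hqi : q < i)
    (hq : (q, j) ∉ upTo D j) (hjk : j < k) : (i, q) ∈ upTo D k :=
  upTo_mono D hjk (mem_upTo_succ hD hjq hqi hq)

theorem exists_of_mem_upTo {i q k : ℕ} (h : (i, q) ∈ upTo D k) :
    ∃ j < k, (i, j) ∈ D ∧ j < q ∧ q < i ∧ (q, j) ∉ upTo D j := by
  induction k with
  | zero => simp [upTo] at h
  | succ k ih =>
    simp only [upTo, step, Finset.mem_union, Finset.mem_biUnion, Finset.mem_filter,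
      Finset.mem_image, Finset.mem_Ioo, Prod.mk.injEq] at h
    rcases h with h | ⟨⟨r, j⟩, ⟨hr, rfl⟩, q', ⟨⟨hjq, hqi⟩, hq⟩, rfl, rfl⟩
    · obtain ⟨j, hj, rest⟩ := ih h
      exact ⟨j, hj.trans (Nat.lt_succ_self k), rest⟩
    · exact ⟨j, Nat.lt_succ_self j, hr, hjq, hqi, hq⟩

theorem mem_upTo_of_mem_of_not_mem {c a b : ℕ} (hca : c < a) (hab : a < b)
    (hb : (b, c) ∈ upTo D c) (ha : (a, c) ∉ upTo D c) : (b, a) ∈ upTo D a := by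
  induction c using Nat.strong_induction_on generalizing a b with
  | _ c ih =>
    obtain ⟨j, hjc, hD, hjc', -, hc⟩ := exists_of_mem_upTo hb
    by_cases haj : (a, j) ∈ upTo D j
    · exact absurd (ih j hjc hjc' hca haj hc) ha
    · exact mem_upTo_of_lt hD (hjc.trans hca) hab haj (hjc.trans hca)

theorem mem_or_mem_of_mem {n i q m : ℕ} (h : (i, q) ∈ Mset n D) (hqm : q < m) (hmi : m < i) :
    (i, m) ∈ Mset n D ∨ (m, q) ∈ Mset n D := by
  rw [eq_upTo] at h ⊢
  obtain ⟨j, hj, hD, hjq, -, hq⟩ := exists_of_mem_upTo h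
  by_cases hm : (m, j) ∈ upTo D j
  · obtain ⟨j', hj'j, hD', hj'j', -, hj⟩ := exists_of_mem_upTo hm
    by_cases hqj' : (q, j') ∈ upTo D j'
    · exact absurd (mem_upTo_of_mem_of_not_mem hj'j' hjq hqj' hj) hq
    · exact .inr (mem_upTo_of_lt hD' (hj'j'.trans hjq) hqm hqj' (by omega))
  · exact .inl (mem_upTo_of_lt hD (hjq.trans hqm) hmi hm hj)

end Mset

theorem inP_commutator_general (n : ℕ) (D : Finset (ℕ × ℕ))
    (x y : Matrix (Fin n) (Fin n) ℂ) (hx : inP n D x) (hy : inP n D y) :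
    inP n D (x * y - y * x) := by
  have split : ∀ a b c : Fin n, (¬ a < b ∨ ((b : ℕ) + 1, (a : ℕ) + 1) ∈ Mset n D) →
      (¬ a < c ∨ ((c : ℕ) + 1, (a : ℕ) + 1) ∈ Mset n D) ∨
        (¬ c < b ∨ ((b : ℕ) + 1, (c : ℕ) + 1) ∈ Mset n D) := by
    intro a b c hab
    by_cases hac : a < c
    · by_cases hcb : c < b
      · have hM := hab.resolve_left (not_not.2 (hac.trans hcb))
        rw [Fin.lt_def] at hac hcb
        exact (Mset.mem_or_mem_of_mem hM (by omega) (by omega)).symm.imp .inr .inr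
      · exact .inr (.inl hcb)
    · exact .inl (.inl hac)
  intro a b hab
  rw [Matrix.sub_apply, Matrix.mul_apply_eq_zero_of_split split hx hy hab,
    Matrix.mul_apply_eq_zero_of_split split hy hx hab, sub_zero]

/-- Proposition 2.6: for every rook placement `D`, the subspace `𝔭` is a Lie
subalgebra of `𝔫`, i.e. it is closed under the commutator `[x,y] = xy − yx`. -/
theorem inP_commutator (n : ℕ) (D : Finset (ℕ × ℕ)) (hD : IsRP n D)
    (x y : Matrix (Fin n) (Fin n) ℂ) (hx : inP n D x) (hy : inP n D y) :
    inP n D (x * y - y * x) :=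
  inP_commutator_general n D x y hx hy
end

section
/- Let n₀ = ⌊n/2⌋ and D₀ = {(n+1−r, r) : 1 ≤ r ≤ n₀} = {(n,1), (n−1,2), …, (n−n₀+1, n₀)}. Then D₀ is a rook placement, and every rook placement D ⊆ Φ⁺ satisfies D ≤ D₀; i.e. D₀ is the maximal element of the poset ℛ of rook placements. -/
/-!
A rook placement has at most one rook per row and per column, so the rooks counted by
`(R_D)_{i,j}` (rows `i..n`, columns `1..j`) number at most `min j (n + 1 - i)`.
The antidiagonal placement `D₀` attains this bound at every entry with `j < i`: its rooks
`(n + 1 - r, r)` counted there are exactly those with `r ≤ min j (n + 1 - i)`, and this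
minimum never exceeds `n / 2` because `j + (n + 1 - i) ≤ n`.
-/

def antidiagPlacement (n : ℕ) : Finset (ℕ × ℕ) :=
  (Finset.Icc 1 (n / 2)).image (fun r => (n + 1 - r, r))

theorem isRP_antidiagPlacement (n : ℕ) : IsRP n (antidiagPlacement n) := by
  refine ⟨fun p hp => ?_, fun p hp q hq hpq => ?_⟩
  · obtain ⟨r, hr, rfl⟩ := Finset.mem_image.1 hp
    rw [Finset.mem_Icc] at hr
    simp only [PhiPos, Finset.mem_filter, Finset.mem_product, Finset.mem_Icc]
    omega
  · obtain ⟨r, hr, rfl⟩ := Finset.mem_image.1 hp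
    obtain ⟨s, hs, rfl⟩ := Finset.mem_image.1 hq
    rw [Finset.mem_Icc] at hr hs
    have hrs : r ≠ s := fun h => hpq (by rw [h])
    dsimp only
    omega

theorem RD_antidiagPlacement {n i j : ℕ} (hji : j < i) :
    RD (antidiagPlacement n) i j = min j (n + 1 - i) := by
  rw [RD, if_pos hji, antidiagPlacement, Finset.filter_image,
    Finset.card_image_of_injOn (fun r _ s _ h => congrArg Prod.snd h)]
  have hfilter : (Finset.Icc 1 (n / 2)).filter
      (fun r => i ≤ (n + 1 - r, r).1 ∧ (n + 1 - r, r).2 ≤ j)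
      = Finset.Icc 1 (min j (n + 1 - i)) := by
    ext r
    simp only [Finset.mem_filter, Finset.mem_Icc]
    omega
  rw [hfilter, Nat.card_Icc, Nat.add_sub_cancel]

namespace IsRP

variable {n : ℕ} {D : Finset (ℕ × ℕ)}

theorem injOn_fst_s11 (hD : IsRP n D) : Set.InjOn Prod.fst (D : Set (ℕ × ℕ)) :=
  fun p hp q hq h => by_contra fun hpq => (hD.2 p hp q hq hpq).1 h

theorem injOn_snd_s11 (hD : IsRP n D) : Set.InjOn Prod.snd (D : Set (ℕ × ℕ)) :=
  fun p hp q hq h => by_contra fun hpq => (hD.2 p hp q hq hpq).2 h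

theorem mem_phiPos (hD : IsRP n D) {p : ℕ × ℕ} (hp : p ∈ D) :
    1 ≤ p.2 ∧ p.2 < p.1 ∧ p.1 ≤ n := by
  have hpos := hD.1 hp
  simp only [PhiPos, Finset.mem_filter, Finset.mem_product, Finset.mem_Icc] at hpos
  omega

theorem card_filter_le_col (hD : IsRP n D) (i j : ℕ) :
    (D.filter (fun p => i ≤ p.1 ∧ p.2 ≤ j)).card ≤ j := by
  simpa using Finset.card_le_card_of_injOn Prod.snd
    (s := D.filter (fun p => i ≤ p.1 ∧ p.2 ≤ j)) (t := Finset.Icc 1 j)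
    (fun p hp => by
      rw [Finset.mem_coe, Finset.mem_filter] at hp
      exact Finset.mem_Icc.2 ⟨(hD.mem_phiPos hp.1).1, hp.2.2⟩)
    (hD.injOn_snd_s11.mono (Finset.coe_subset.2 (Finset.filter_subset _ _)))

theorem card_filter_le_row (hD : IsRP n D) (i j : ℕ) :
    (D.filter (fun p => i ≤ p.1 ∧ p.2 ≤ j)).card ≤ n + 1 - i := by
  simpa using Finset.card_le_card_of_injOn Prod.fst
    (s := D.filter (fun p => i ≤ p.1 ∧ p.2 ≤ j)) (t := Finset.Icc i n)
    (fun p hp => by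
      rw [Finset.mem_coe, Finset.mem_filter] at hp
      exact Finset.mem_Icc.2 ⟨hp.2.1, (hD.mem_phiPos hp.1).2.2⟩)
    (hD.injOn_fst_s11.mono (Finset.coe_subset.2 (Finset.filter_subset _ _)))

theorem RD_le_min (hD : IsRP n D) {i j : ℕ} (hji : j < i) :
    RD D i j ≤ min j (n + 1 - i) := by
  rw [RD, if_pos hji]
  exact le_min (hD.card_filter_le_col i j) (hD.card_filter_le_row i j)

end IsRP

theorem D0_is_max_general (n : ℕ) :
    IsRP n ((Finset.Icc 1 (n / 2)).image (fun r => (n + 1 - r, r))) ∧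
    ∀ D : Finset (ℕ × ℕ), IsRP n D →
      rpLE D ((Finset.Icc 1 (n / 2)).image (fun r => (n + 1 - r, r))) := by
  refine ⟨isRP_antidiagPlacement n, fun D hD i j => ?_⟩
  by_cases hji : j < i
  · exact (hD.RD_le_min hji).trans_eq (RD_antidiagPlacement hji).symm
  · simp only [RD, if_neg hji, le_refl]

/-- `D₀ = {(n,1), (n−1,2), …, (n−⌊n/2⌋+1, ⌊n/2⌋)}` is a rook placement, and it is
the maximal element of the poset `ℛ` of rook placements. -/
theorem D0_is_max (n : ℕ) (hn : 1 ≤ n) :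
    IsRP n ((Finset.Icc 1 (n / 2)).image (fun r => (n + 1 - r, r))) ∧
    ∀ D : Finset (ℕ × ℕ), IsRP n D →
      rpLE D ((Finset.Icc 1 (n / 2)).image (fun r => (n + 1 - r, r))) :=
  D0_is_max_general n
end

section
/- For every rook placement D ∈ ℛ, one has Ñ⁻(D) ⊆ L̃⁻(D): if (i,j) is a minimal element of D (for the order ≼ on Φ⁺) and T = D∖{(i,j)}, then T < D, |T| < |D|, and every rook placement S with T ≤ S < D and |S| < |D| equals T. -/
/-- The partial order `≼` on `Φ⁺`: `(a,b) ≼ (c,d)` iff `a ≤ c` and `b ≥ d`. -/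
def Ple (p q : ℕ × ℕ) : Prop := p.1 ≤ q.1 ∧ q.2 ≤ p.2

/-- The strict order `≺` on `Φ⁺`. -/
def Plt (p q : ℕ × ℕ) : Prop := Ple p q ∧ p ≠ q

lemma pos_and_lt_of_mem_PhiPos {n : ℕ} {p : ℕ × ℕ} (hp : p ∈ PhiPos n) : 0 < p.2 ∧ p.2 < p.1 := by
  simp only [PhiPos, Finset.mem_filter, Finset.mem_product, Finset.mem_Icc] at hp
  omega

lemma IsRP.mono_s13 {n : ℕ} {D D' : Finset (ℕ × ℕ)} (hD : IsRP n D) (h : D' ⊆ D) : IsRP n D' :=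
  ⟨h.trans hD.1, fun p hp q hq hpq => hD.2 p (h hp) q (h hq) hpq⟩

lemma rpLE_of_subset {D D' : Finset (ℕ × ℕ)} (h : D' ⊆ D) : rpLE D' D := by
  intro a b
  unfold RD
  split
  · exact Finset.card_le_card (Finset.filter_subset_filter _ h)
  · exact le_rfl

lemma RD_inclusion_exclusion (X : Finset (ℕ × ℕ)) {a b : ℕ} (hb : 0 < b) (hba : b < a) :
    RD X a b + RD X (a + 1) (b - 1)
      = RD X (a + 1) b + RD X a (b - 1) + if (a, b) ∈ X then 1 else 0 := by
  unfold RD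
  rw [if_pos hba, if_pos (by omega : b - 1 < a + 1), if_pos (by omega : b < a + 1),
    if_pos (by omega : b - 1 < a), Finset.card_filter, Finset.card_filter, Finset.card_filter,
    Finset.card_filter, ← Finset.sum_ite_eq' X (a, b) (fun _ => 1), ← Finset.sum_add_distrib,
    ← Finset.sum_add_distrib, ← Finset.sum_add_distrib]
  refine Finset.sum_congr rfl fun ⟨c, d⟩ _ => ?_
  simp only [Prod.mk.injEq]
  split_ifs <;> omega

lemma mem_of_RD_eq_of_RD_le {S T : Finset (ℕ × ℕ)} {a b : ℕ} (hb : 0 < b) (hba : b < a)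
    (hT : (a, b) ∈ T) (h₁ : RD S a b = RD T a b) (h₂ : RD S (a + 1) b = RD T (a + 1) b)
    (h₃ : RD S a (b - 1) = RD T a (b - 1)) (h₄ : RD T (a + 1) (b - 1) ≤ RD S (a + 1) (b - 1)) :
    (a, b) ∈ S := by
  by_contra hS
  have kS := RD_inclusion_exclusion S hb hba
  have kT := RD_inclusion_exclusion T hb hba
  rw [if_neg hS] at kS
  rw [if_pos hT] at kT
  omega

lemma RD_eq_RD_erase_add {D : Finset (ℕ × ℕ)} {p : ℕ × ℕ} (hp : p ∈ D) (a b : ℕ) :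
    RD D a b = RD (D.erase p) a b + if b < a ∧ a ≤ p.1 ∧ p.2 ≤ b then 1 else 0 := by
  unfold RD
  by_cases hba : b < a
  · simp only [hba, if_true, true_and, Finset.filter_erase]
    split_ifs with hQ
    · rw [Finset.card_erase_add_one (Finset.mem_filter.mpr ⟨hp, hQ⟩)]
    · rw [add_zero, Finset.erase_eq_of_notMem]
      exact fun h => hQ (Finset.mem_filter.mp h).2
  · simp [hba]

theorem erase_subset_of_rpLE_of_rpLE {n : ℕ} {D S : Finset (ℕ × ℕ)} (hD : D ⊆ PhiPos n)
    {p : ℕ × ℕ} (hp : p ∈ D) (hmin : ∀ q ∈ D, Ple q p → q = p)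
    (hTS : rpLE (D.erase p) S) (hSD : rpLE S D) : D.erase p ⊆ S := by
  have hagree : ∀ a b, ¬Ple (a, b) p → RD S a b = RD (D.erase p) a b := fun a b h => by
    have := hSD a b
    rw [RD_eq_RD_erase_add hp, if_neg fun h' => h h'.2] at this
    exact le_antisymm this (hTS a b)
  rintro ⟨a, b⟩ hab
  obtain ⟨hne, habD⟩ := Finset.mem_erase.mp hab
  have hQ : ¬Ple (a, b) p := fun h => hne (hmin _ habD h)
  obtain ⟨hb, hba⟩ := pos_and_lt_of_mem_PhiPos (hD habD)
  refine mem_of_RD_eq_of_RD_le hb hba hab (hagree _ _ hQ) (hagree _ _ ?_) (hagree _ _ ?_) (hTS _ _)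
  · exact fun h => hQ ⟨(Nat.le_succ a).trans h.1, h.2⟩
  · exact fun h => hQ ⟨h.1, h.2.trans (Nat.sub_le b 1)⟩

/-- Lemma 3.5: `Ñ⁻(D) ⊆ L̃⁻(D)`. If `(i,j)` is a `≼`-minimal element of `D` and
`T = D ∖ {(i,j)}`, then `T` is a rook placement with `T < D`, `|T| < |D|`, and
every rook placement `S` with `T ≤ S < D` and `|S| < |D|` equals `T`. -/
theorem ntilde_subset_ltilde (n : ℕ) (D : Finset (ℕ × ℕ)) (hD : IsRP n D)
    (i j : ℕ) (hij : (i, j) ∈ D) (hmin : ∀ q ∈ D, Ple q (i, j) → q = (i, j)) :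
    IsRP n (D.erase (i, j)) ∧ rpLT (D.erase (i, j)) D ∧
    (D.erase (i, j)).card < D.card ∧
    ∀ S, IsRP n S → rpLE (D.erase (i, j)) S → rpLT S D → S.card < D.card →
      S = D.erase (i, j) := by
  have hTD : D.erase (i, j) ⊆ D := Finset.erase_subset _ _
  refine ⟨hD.mono_s13 hTD, ⟨rpLE_of_subset hTD, (Finset.erase_ssubset hij).ne⟩,
    Finset.card_erase_lt_of_mem hij, fun S _ hTS hSD hcard => ?_⟩
  have hTS' : D.erase (i, j) ⊆ S := erase_subset_of_rpLE_of_rpLE hD.1 hij hmin hTS hSD.1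
  refine (Finset.eq_of_subset_of_card_le hTS' ?_).symm
  rw [Finset.card_erase_of_mem hij]
  omega
end

section
/- For every rook placement D ∈ ℛ, one has N⁺(D) ⊆ L⁺(D): every T ∈ N⁺(D) satisfies T < D, |T| > |D|, and every rook placement S with T ≤ S < D equals T. -/
/-- `D ∩ R_k ≠ ∅`: row `k` is occupied. -/
def rowOcc (D : Finset (ℕ × ℕ)) (k : ℕ) : Prop := ∃ p ∈ D, p.1 = k

/-- `D ∩ C_k ≠ ∅`: column `k` is occupied. -/
def colOcc (D : Finset (ℕ × ℕ)) (k : ℕ) : Prop := ∃ p ∈ D, p.2 = k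
/-- `T ∈ N⁺(D)`: `T = D^{α,β}_{(i,j)}` for some `(i,j) ∈ D` and
`(α,β) ∈ C_{(i,j)}(D)`. -/
def inNp (D T : Finset (ℕ × ℕ)) : Prop :=
  ∃ i j a b, (i, j) ∈ D ∧ j < a ∧ a ≤ b ∧ b < i ∧
    ¬ rowOcc D a ∧ ¬ colOcc D b ∧
    (∀ k, a < k → k < b → rowOcc D k ∧ colOcc D k) ∧
    (∀ p ∈ D, Plt p (i, j) → ¬ Plt p (a, j) → Plt p (i, b)) ∧
    (a ≠ b → rowOcc D b ∧ colOcc D a) ∧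
    T = insert (i, b) (insert (a, j) (D.erase (i, j)))

/-- `T ∈ L⁺(D)`: `T < D`, `|T| > |D|`, and every `S ∈ ℛ` with `T ≤ S < D` equals `T`. -/
def inLp (n : ℕ) (D T : Finset (ℕ × ℕ)) : Prop :=
  IsRP n T ∧ rpLT T D ∧ D.card < T.card ∧
    ∀ S, IsRP n S → rpLE T S → rpLT S D → S = T

/-!
Replacing the rook `(i, j)` by `(a, j)` and `(i, b)` lowers the rank matrix by one exactly
on the box `a < r ≤ i, j ≤ c < b` and leaves it unchanged elsewhere. A rook placement `S` with
`T ≤ S ≤ D` therefore has the rank entries of `D` off that box; since membership is a second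
difference of rank entries, `S` agrees with `D` outside the rectangle `[a, i] × [j, b]`, which
meets `D` only in `(i, j)` (this is where the covering condition of `C_{(i,j)}(D)` enters).
Inside the rectangle, the rows `(a, b]` and columns `[a, b)` are taken by rooks of `D` outside
it, and the counts along its left and lower edges leave room for exactly one rook in the columns
`< a` and one in the rows `> b`. So `S` meets the rectangle in `{(i, j)}`, giving `S = D`, or in
`{(a, j), (i, b)}`, giving `S = T`.
-/

open Finset

namespace RookPlacement

def cornerCount (A : Finset (ℕ × ℕ)) (r c : ℕ) : ℕ :=
  #{p ∈ A | r ≤ p.1 ∧ p.2 ≤ c}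

theorem RD_eq_cornerCount (A : Finset (ℕ × ℕ)) {r c : ℕ} (h : c < r) :
    RD A r c = cornerCount A r c :=
  if_pos h

theorem rpLE_iff_cornerCount_le {A B : Finset (ℕ × ℕ)} :
    rpLE A B ↔ ∀ r c, c < r → cornerCount A r c ≤ cornerCount B r c := by
  refine ⟨fun h r c hrc => ?_, fun h r c => ?_⟩
  · simpa only [RD_eq_cornerCount _ hrc] using h r c
  · unfold RD
    split_ifs with hrc
    exacts [h r c hrc, le_rfl]

theorem mem_PhiPos {n x y : ℕ} : (x, y) ∈ PhiPos n ↔ 1 ≤ y ∧ y < x ∧ x ≤ n := by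
  simp only [PhiPos, mem_filter, mem_product, Finset.mem_Icc]
  omega

theorem cornerCount_insert {A : Finset (ℕ × ℕ)} {x : ℕ × ℕ} (hx : x ∉ A) (r c : ℕ) :
    cornerCount (insert x A) r c = (if r ≤ x.1 ∧ x.2 ≤ c then 1 else 0) + cornerCount A r c := by
  unfold cornerCount
  rw [filter_insert]
  split_ifs
  · rw [card_insert_of_notMem (fun hx' => hx (mem_of_mem_filter _ hx')), add_comm]
  · rw [zero_add]

theorem cornerCount_singleton (x : ℕ × ℕ) (r c : ℕ) :
    cornerCount {x} r c = if r ≤ x.1 ∧ x.2 ≤ c then 1 else 0 := by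
  simpa [cornerCount] using cornerCount_insert (notMem_empty x) r c

theorem cornerCount_inter_add_sdiff (A R : Finset (ℕ × ℕ)) (r c : ℕ) :
    cornerCount (A ∩ R) r c + cornerCount (A \ R) r c = cornerCount A r c := by
  simp only [cornerCount]
  rw [← card_inter_add_card_sdiff {p ∈ A | r ≤ p.1 ∧ p.2 ≤ c} R]
  congr 2 <;> ext p <;> simp only [mem_filter, mem_inter, mem_sdiff] <;> tauto

theorem cornerCount_add_cornerCount (A : Finset (ℕ × ℕ)) (x y : ℕ) (hy : 1 ≤ y) :
    cornerCount A x y + cornerCount A (x + 1) (y - 1)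
      = cornerCount A (x + 1) y + cornerCount A x (y - 1) + (if (x, y) ∈ A then 1 else 0) := by
  have hind : (if (x, y) ∈ A then 1 else 0) = ∑ p ∈ A, if p = (x, y) then (1 : ℕ) else 0 := by
    rw [sum_ite_eq' A (x, y) (fun _ => 1)]
  unfold cornerCount
  simp only [card_filter, hind, ← sum_add_distrib]
  refine sum_congr rfl fun p _ => ?_
  simp only [Prod.ext_iff]
  split_ifs <;> omega

theorem mem_iff_of_cornerCount_eq {A B : Finset (ℕ × ℕ)} {x y : ℕ} (hy : 1 ≤ y)
    (h : ∀ r c, x ≤ r → r ≤ x + 1 → y - 1 ≤ c → c ≤ y → cornerCount A r c = cornerCount B r c) :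
    (x, y) ∈ A ↔ (x, y) ∈ B := by
  have hA := cornerCount_add_cornerCount A x y hy
  have hB := cornerCount_add_cornerCount B x y hy
  rw [h x y le_rfl (by omega) (by omega) le_rfl, h (x + 1) (y - 1) (by omega) le_rfl le_rfl
    (by omega), h (x + 1) y (by omega) le_rfl (by omega) le_rfl, h x (y - 1) le_rfl (by omega)
    le_rfl (by omega)] at hA
  by_cases hxA : (x, y) ∈ A <;> by_cases hxB : (x, y) ∈ B <;> simp_all

theorem exists_eq_of_cornerCount_eq_one {A : Finset (ℕ × ℕ)} {r c : ℕ}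
    (h : cornerCount A r c = 1) :
    ∃ P ∈ A, (r ≤ P.1 ∧ P.2 ≤ c) ∧ ∀ p ∈ A, r ≤ p.1 → p.2 ≤ c → p = P := by
  obtain ⟨P, hP⟩ := card_eq_one.mp h
  have hmem : ∀ p, p ∈ A ∧ r ≤ p.1 ∧ p.2 ≤ c ↔ p = P := fun p => by
    rw [← mem_singleton, ← hP, mem_filter]
  obtain ⟨hPA, hPrc⟩ := (hmem P).mpr rfl
  exact ⟨P, hPA, hPrc, fun p hp h1 h2 => (hmem p).mp ⟨hp, h1, h2⟩⟩

theorem mem_Icc_prod_iff {a j i b : ℕ} {p : ℕ × ℕ} :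
    p ∈ Icc (a, j) (i, b) ↔ a ≤ p.1 ∧ p.1 ≤ i ∧ j ≤ p.2 ∧ p.2 ≤ b := by
  simp only [Finset.mem_Icc, Prod.le_def]
  tauto

theorem sdiff_Icc_eq_of_cornerCount_eq {n a j i b : ℕ} {A B : Finset (ℕ × ℕ)}
    (hA : A ⊆ PhiPos n) (hB : B ⊆ PhiPos n)
    (h : ∀ r c, c < r → ¬(a < r ∧ r ≤ i ∧ j ≤ c ∧ c < b) → cornerCount A r c = cornerCount B r c) :
    A \ Icc (a, j) (i, b) = B \ Icc (a, j) (i, b) := by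
  ext ⟨x, y⟩
  simp only [mem_sdiff, mem_Icc_prod_iff]
  by_cases hR : a ≤ x ∧ x ≤ i ∧ j ≤ y ∧ y ≤ b
  · simp [hR]
  by_cases hxy : 1 ≤ y ∧ y < x
  · rw [mem_iff_of_cornerCount_eq hxy.1 fun r c _ _ _ _ => h r c (by omega) (by omega)]
  · have hnot : ∀ C ⊆ PhiPos n, (x, y) ∉ C := fun C hC hx => hxy (by
      have := mem_PhiPos.mp (hC hx)
      omega)
    simp [hnot A hA, hnot B hB]

theorem eq_or_eq_of_cornerCount_edges {a j i b : ℕ} {E : Finset (ℕ × ℕ)}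
    (hja : j < a) (hbi : b < i)
    (hE : ∀ p ∈ E, p ∈ Icc (a, j) (i, b) ∧ p.2 < p.1)
    (hrows : ∀ p ∈ E, ¬(a < p.1 ∧ p.1 ≤ b)) (hcols : ∀ p ∈ E, ¬(a ≤ p.2 ∧ p.2 < b))
    (hleft : ∀ y, j ≤ y → y < a → cornerCount E a y = 1)
    (hlow : ∀ x, b < x → x ≤ i → cornerCount E x b = 1) :
    E = {(i, j)} ∨ E = {(a, j), (i, b)} := by
  have hE' : ∀ p ∈ E, (a ≤ p.1 ∧ p.1 ≤ i ∧ j ≤ p.2 ∧ p.2 ≤ b) ∧ p.2 < p.1 ∧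
      ¬(a < p.1 ∧ p.1 ≤ b) ∧ ¬(a ≤ p.2 ∧ p.2 < b) := fun p hp =>
    ⟨mem_Icc_prod_iff.mp (hE p hp).1, (hE p hp).2, hrows p hp, hcols p hp⟩
  obtain ⟨L, hLE, -, hLuniq⟩ :=
    exists_eq_of_cornerCount_eq_one (hleft (a - 1) (by omega) (by omega))
  obtain ⟨L', hL'E, hL'c, -⟩ := exists_eq_of_cornerCount_eq_one (hleft j le_rfl hja)
  obtain ⟨W, hWE, -, hWuniq⟩ :=
    exists_eq_of_cornerCount_eq_one (hlow (b + 1) (by omega) (by omega))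
  obtain ⟨W', hW'E, hW'c, -⟩ := exists_eq_of_cornerCount_eq_one (hlow i hbi le_rfl)
  have hLj : L.2 = j := by
    have := hLuniq L' hL'E hL'c.1 (by omega)
    have := (hE' L hLE).1
    subst L'
    omega
  have hWi : W.1 = i := by
    have := hWuniq W' hW'E (by omega) hW'c.2
    have := (hE' W hWE).1
    subst W'
    omega
  have hEq : ∀ p ∈ E, p = L ∨ p = W := fun p hp => by
    have := hE' p hp
    by_cases hpa : p.2 < a
    · exact .inl (hLuniq p hp this.1.1 (by omega))
    · exact .inr (hWuniq p hp (by omega) this.1.2.2.2)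
  by_cases hLW : L = W
  · subst hLW
    have hL : L = (i, j) := Prod.ext hWi hLj
    refine .inl (eq_singleton_iff_unique_mem.mpr ⟨hL ▸ hLE, fun p hp => ?_⟩)
    rcases hEq p hp with rfl | rfl <;> exact hL
  · have hL : L = (a, j) := by
      refine Prod.ext ?_ hLj
      have := hE' L hLE
      by_contra hLa
      exact hLW (hWuniq L hLE (by omega) this.1.2.2.2)
    have hW : W = (i, b) := by
      refine Prod.ext hWi ?_
      have := hE' W hWE
      by_contra hWb
      exact hLW (hLuniq W hWE this.1.1 (by omega)).symm
    refine .inr (ext fun p => ⟨fun hp => ?_, fun hp => ?_⟩)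
    · rcases hEq p hp with rfl | rfl <;> simp [hL, hW]
    · rcases mem_insert.mp hp with rfl | hp
      · exact hL ▸ hLE
      · exact (mem_singleton.mp hp) ▸ hW ▸ hWE

/-- `(a, b) ∈ C_{(i,j)}(D)`, with `a, b` standing for `α, β`. -/
structure MovePair (D : Finset (ℕ × ℕ)) (i j a b : ℕ) : Prop where
  mem : (i, j) ∈ D
  j_lt_a : j < a
  a_le_b : a ≤ b
  b_lt_i : b < i
  not_rowOcc_a : ¬ rowOcc D a
  not_colOcc_b : ¬ colOcc D b
  occ_between : ∀ k, a < k → k < b → rowOcc D k ∧ colOcc D k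
  cover : ∀ p ∈ D, Plt p (i, j) → ¬ Plt p (a, j) → Plt p (i, b)
  occ_ends : a ≠ b → rowOcc D b ∧ colOcc D a

/-- `D^{a,b}_{(i,j)}`. -/
def move (D : Finset (ℕ × ℕ)) (i j a b : ℕ) : Finset (ℕ × ℕ) :=
  insert (i, b) (insert (a, j) (D.erase (i, j)))

theorem mem_move {D : Finset (ℕ × ℕ)} {i j a b : ℕ} {p : ℕ × ℕ} :
    p ∈ move D i j a b ↔ p = (i, b) ∨ p = (a, j) ∨ (p ≠ (i, j) ∧ p ∈ D) := by
  simp only [move, mem_insert, mem_erase]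

namespace MovePair

variable {n i j a b : ℕ} {D S : Finset (ℕ × ℕ)}

theorem notMem_left (h : MovePair D i j a b) : (a, j) ∉ D :=
  fun hD => h.not_rowOcc_a ⟨_, hD, rfl⟩

theorem notMem_erase_left (h : MovePair D i j a b) : (a, j) ∉ D.erase (i, j) :=
  fun hD => h.notMem_left (mem_of_mem_erase hD)

theorem notMem_insert_right (h : MovePair D i j a b) :
    (i, b) ∉ insert (a, j) (D.erase (i, j)) := by
  have := h.a_le_b
  have := h.b_lt_i
  simp only [mem_insert, Prod.mk.injEq, not_or]
  exact ⟨by omega, fun hD => h.not_colOcc_b ⟨_, mem_of_mem_erase hD, rfl⟩⟩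

theorem isRP_move (hD : IsRP n D) (h : MovePair D i j a b) : IsRP n (move D i j a b) := by
  obtain ⟨hsub, hrook⟩ := hD
  obtain ⟨hj, -, hi⟩ := mem_PhiPos.mp (hsub h.mem)
  have := h.j_lt_a
  have := h.a_le_b
  have := h.b_lt_i
  have hold : ∀ z ∈ D, z ≠ (i, j) → z.1 ≠ i ∧ z.2 ≠ j ∧ z.1 ≠ a ∧ z.2 ≠ b := fun z hz hne =>
    ⟨(hrook z hz _ h.mem hne).1, (hrook z hz _ h.mem hne).2,
      fun e => h.not_rowOcc_a ⟨z, hz, e⟩, fun e => h.not_colOcc_b ⟨z, hz, e⟩⟩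
  refine ⟨fun p hp => ?_, fun p hp q hq hpq => ?_⟩
  · rcases mem_move.mp hp with rfl | rfl | ⟨-, hp⟩
    · exact mem_PhiPos.mpr (by omega)
    · exact mem_PhiPos.mpr (by omega)
    · exact hsub hp
  · rcases mem_move.mp hp with rfl | rfl | ⟨hpne, hp⟩ <;>
      rcases mem_move.mp hq with rfl | rfl | ⟨hqne, hq⟩
    all_goals first
      | exact absurd rfl hpq
      | exact hrook p hp q hq hpq
      | (have := hold p hp hpne; omega)
      | (have := hold q hq hqne; omega)
      | omega

theorem cornerCount_move_add (h : MovePair D i j a b) (r c : ℕ) :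
    cornerCount (move D i j a b) r c + (if r ≤ i ∧ j ≤ c then 1 else 0) =
      cornerCount D r c + (if r ≤ i ∧ b ≤ c then 1 else 0) + (if r ≤ a ∧ j ≤ c then 1 else 0) := by
  rw [move, cornerCount_insert h.notMem_insert_right, cornerCount_insert h.notMem_erase_left,
    ← insert_erase h.mem, cornerCount_insert (notMem_erase _ _), erase_insert (notMem_erase _ _)]
  dsimp only
  omega

theorem cornerCount_move_le (h : MovePair D i j a b) {r c : ℕ} (hrc : c < r) :
    cornerCount (move D i j a b) r c ≤ cornerCount D r c := by
  have hadd := h.cornerCount_move_add r c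
  have := h.a_le_b
  have := h.b_lt_i
  have := h.j_lt_a
  split_ifs at hadd <;> omega

theorem cornerCount_move_eq (h : MovePair D i j a b) {r c : ℕ} (hrc : c < r)
    (hbox : ¬(a < r ∧ r ≤ i ∧ j ≤ c ∧ c < b)) :
    cornerCount (move D i j a b) r c = cornerCount D r c := by
  have hadd := h.cornerCount_move_add r c
  have := h.a_le_b
  have := h.b_lt_i
  have := h.j_lt_a
  split_ifs at hadd <;> omega

theorem rpLT_move (h : MovePair D i j a b) : rpLT (move D i j a b) D :=
  ⟨rpLE_iff_cornerCount_le.mpr fun _ _ hrc => h.cornerCount_move_le hrc,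
    fun he => h.notMem_left (he ▸ mem_move.mpr (.inr (.inl rfl)))⟩

theorem card_move (h : MovePair D i j a b) : (move D i j a b).card = D.card + 1 := by
  rw [move, card_insert_of_notMem h.notMem_insert_right,
    card_insert_of_notMem h.notMem_erase_left, card_erase_add_one h.mem]

theorem eq_of_mem_Icc (h : MovePair D i j a b) {p : ℕ × ℕ} (hp : p ∈ D)
    (hR : p ∈ Icc (a, j) (i, b)) : p = (i, j) := by
  by_contra hne
  rw [mem_Icc_prod_iff] at hR
  have ha : p.1 ≠ a := fun e => h.not_rowOcc_a ⟨p, hp, e⟩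
  have hb : p.2 ≠ b := fun e => h.not_colOcc_b ⟨p, hp, e⟩
  have hcov := h.cover p hp ⟨⟨hR.2.1, hR.2.2.1⟩, hne⟩ fun hlt => ha (le_antisymm hlt.1.1 hR.1)
  exact hb (le_antisymm hR.2.2.2 hcov.1.2)

theorem inter_Icc (h : MovePair D i j a b) : D ∩ Icc (a, j) (i, b) = {(i, j)} := by
  have := h.j_lt_a
  have := h.a_le_b
  have := h.b_lt_i
  ext p
  simp only [mem_inter, mem_singleton]
  constructor
  · exact fun ⟨hp, hR⟩ => h.eq_of_mem_Icc hp hR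
  · rintro rfl
    exact ⟨h.mem, mem_Icc_prod_iff.mpr (by omega)⟩

theorem move_inter_Icc (h : MovePair D i j a b) :
    move D i j a b ∩ Icc (a, j) (i, b) = {(a, j), (i, b)} := by
  have := h.j_lt_a
  have := h.a_le_b
  have := h.b_lt_i
  ext p
  simp only [mem_inter, mem_move, mem_insert, mem_singleton]
  constructor
  · rintro ⟨rfl | rfl | ⟨hne, hp⟩, hR⟩
    · exact .inr rfl
    · exact .inl rfl
    · exact absurd (h.eq_of_mem_Icc hp hR) hne
  · rintro (rfl | rfl)
    · exact ⟨.inr (.inl rfl), mem_Icc_prod_iff.mpr (by omega)⟩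
    · exact ⟨.inl rfl, mem_Icc_prod_iff.mpr (by omega)⟩

theorem move_sdiff_Icc (h : MovePair D i j a b) :
    move D i j a b \ Icc (a, j) (i, b) = D \ Icc (a, j) (i, b) := by
  have := h.j_lt_a
  have := h.a_le_b
  have := h.b_lt_i
  ext p
  simp only [mem_sdiff, mem_move]
  constructor
  · rintro ⟨rfl | rfl | ⟨-, hp⟩, hR⟩
    · exact absurd (mem_Icc_prod_iff.mpr (by omega)) hR
    · exact absurd (mem_Icc_prod_iff.mpr (by omega)) hR
    · exact ⟨hp, hR⟩
  · rintro ⟨hp, hR⟩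
    refine ⟨.inr (.inr ⟨?_, hp⟩), hR⟩
    rintro rfl
    exact hR (mem_Icc_prod_iff.mpr (by omega))

theorem exists_row_mem_sdiff_Icc (h : MovePair D i j a b) {k : ℕ} (hak : a < k) (hkb : k ≤ b) :
    ∃ q ∈ D \ Icc (a, j) (i, b), q.1 = k := by
  obtain ⟨q, hq, rfl⟩ : rowOcc D k := by
    rcases hkb.lt_or_eq with hkb | rfl
    exacts [(h.occ_between k hak hkb).1, (h.occ_ends hak.ne).1]
  refine ⟨q, mem_sdiff.mpr ⟨hq, fun hR => ?_⟩, rfl⟩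
  have := congrArg Prod.fst (h.eq_of_mem_Icc hq hR)
  have := h.b_lt_i
  omega

theorem exists_col_mem_sdiff_Icc (h : MovePair D i j a b) {k : ℕ} (hak : a ≤ k) (hkb : k < b) :
    ∃ q ∈ D \ Icc (a, j) (i, b), q.2 = k := by
  obtain ⟨q, hq, rfl⟩ : colOcc D k := by
    rcases hak.lt_or_eq with hak | rfl
    exacts [(h.occ_between k hak hkb).2, (h.occ_ends hkb.ne).2]
  refine ⟨q, mem_sdiff.mpr ⟨hq, fun hR => ?_⟩, rfl⟩
  have := congrArg Prod.snd (h.eq_of_mem_Icc hq hR)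
  have := h.j_lt_a
  omega

theorem eq_or_eq_move_of_le_of_le (h : MovePair D i j a b) (hD : D ⊆ PhiPos n) (hS : IsRP n S)
    (hTS : rpLE (move D i j a b) S) (hSD : rpLE S D) : S = D ∨ S = move D i j a b := by
  set R := Icc (a, j) (i, b)
  have hcount : ∀ r c, c < r → ¬(a < r ∧ r ≤ i ∧ j ≤ c ∧ c < b) →
      cornerCount S r c = cornerCount D r c := fun r c hrc hbox =>
    le_antisymm (rpLE_iff_cornerCount_le.mp hSD r c hrc)
      (h.cornerCount_move_eq hrc hbox ▸ rpLE_iff_cornerCount_le.mp hTS r c hrc)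
  have hout : S \ R = D \ R := sdiff_Icc_eq_of_cornerCount_eq hS.1 hD hcount
  have hedge : ∀ r c, c < r → ¬(a < r ∧ r ≤ i ∧ j ≤ c ∧ c < b) → r ≤ i → j ≤ c →
      cornerCount (S ∩ R) r c = 1 := fun r c hrc hbox hri hjc => by
    have hSsplit := cornerCount_inter_add_sdiff S R r c
    have hDsplit := cornerCount_inter_add_sdiff D R r c
    rw [hout, hcount r c hrc hbox, ← hDsplit, h.inter_Icc, cornerCount_singleton,
      if_pos ⟨hri, hjc⟩] at hSsplit
    omega
  have hrook : ∀ p ∈ S ∩ R, ∀ q ∈ D \ R, p.1 ≠ q.1 ∧ p.2 ≠ q.2 := fun p hp q hq =>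
    hS.2 p (mem_inter.mp hp).1 q (mem_sdiff.mp (hout ▸ hq)).1
      fun e => (mem_sdiff.mp hq).2 (e ▸ (mem_inter.mp hp).2)
  have := h.j_lt_a
  have := h.a_le_b
  have := h.b_lt_i
  have hE := eq_or_eq_of_cornerCount_edges (E := S ∩ R) h.j_lt_a h.b_lt_i
    (fun p hp => ⟨(mem_inter.mp hp).2, (mem_PhiPos.mp (hS.1 (mem_inter.mp hp).1)).2.1⟩)
    (fun p hp ⟨h1, h2⟩ => by
      obtain ⟨q, hq, hqp⟩ := h.exists_row_mem_sdiff_Icc h1 h2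
      exact (hrook p hp q hq).1 hqp.symm)
    (fun p hp ⟨h1, h2⟩ => by
      obtain ⟨q, hq, hqp⟩ := h.exists_col_mem_sdiff_Icc h1 h2
      exact (hrook p hp q hq).2 hqp.symm)
    (fun y hjy hya => hedge a y hya (by omega) (by omega) hjy)
    (fun x hbx hxi => hedge x b hbx (by omega) hxi (by omega))
  rcases hE with hE | hE
  · left
    rw [← sdiff_union_inter S R, ← sdiff_union_inter D R, hout, hE, h.inter_Icc]
  · right
    rw [← sdiff_union_inter S R, ← sdiff_union_inter (move D i j a b) R, hout, hE,
      h.move_inter_Icc, h.move_sdiff_Icc]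

end MovePair

end RookPlacement

open RookPlacement

/-- Lemma 3.7: `N⁺(D) ⊆ L⁺(D)`: every `T ∈ N⁺(D)` is a rook placement with
`T < D`, `|T| > |D|`, and every rook placement `S` with `T ≤ S < D` equals `T`. -/
theorem np_subset_lp (n : ℕ) (D : Finset (ℕ × ℕ)) (hD : IsRP n D) :
    ∀ T, inNp D T → inLp n D T := by
  rintro T ⟨i, j, a, b, hmem, hja, hab, hbi, hra, hcb, hbetween, hcover, hends, hT⟩
  have h : MovePair D i j a b := ⟨hmem, hja, hab, hbi, hra, hcb, hbetween, hcover, hends⟩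
  obtain rfl : T = move D i j a b := hT
  refine ⟨h.isRP_move hD, h.rpLT_move, by rw [h.card_move]; omega, fun S hS hTS hSD => ?_⟩
  exact (h.eq_or_eq_move_of_le_of_le hD.1 hS hTS hSD.1).resolve_left hSD.2
end
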